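/- arXiv:2203.15301 — 4 statements merged into one kernel-verified Lean document; each statement's English description precedes it below -/
import Mathlib

section
/- Let μ = Σ_{n=0}^∞ (3^{-n} δ_{-2^{-n}} + 2^{-n} δ_{2^{-n}}) be the finite Borel measure on ℝ fully supported on X = {0} ∪ ⋃_{n=0}^∞ {2^{-n}, -2^{-n}}, where δ_y denotes the point mass at y. Then μ is not doubling: for every C ≥ 1 there exist x ∈ X and r > 0 with μ(B(x,2r)) > C μ(B(x,r)). -/
open MeasureTheory Metric Set
open scoped NNReal ENNReal

/-- The measure `μ = Σ_{n=0}^∞ (3^{-n} δ_{-2^{-n}} + 2^{-n} δ_{2^{-n}})` on `ℝ`. -/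
noncomputable def nuEx : Measure ℝ :=
  Measure.sum fun n : ℕ =>
    ((3 : ℝ≥0∞)⁻¹ ^ n • Measure.dirac (-((2 : ℝ)⁻¹ ^ n))) +
    ((2 : ℝ≥0∞)⁻¹ ^ n • Measure.dirac ((2 : ℝ)⁻¹ ^ n))

/-- The support `X = {0} ∪ ⋃_{n=0}^∞ {2^{-n}, -2^{-n}}` of `nuEx`. -/
def XEx : Set ℝ := {0} ∪ ⋃ n : ℕ, {(2 : ℝ)⁻¹ ^ n, -((2 : ℝ)⁻¹ ^ n)}

/-!
Left of `0` the atoms of `nuEx` decay like `3⁻¹ ^ n`, right of `0` like `2⁻¹ ^ n`. The ball of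
radius `r = 2⁻¹ ^ (n + 1)` about `-r` is `[-2⁻¹ ^ n, 0]`, which carries only the left atoms of
index `≥ n`, of total mass `(3 / 2) * 3⁻¹ ^ n`; doubling the radius captures the right atom at `r`,
of mass `2⁻¹ ^ (n + 1)`. The ratio of the two is `(3 / 2) ^ n / 3`, which is unbounded.
-/

theorem ENNReal.ofNat_inv_pow_eq_ofReal (a n : ℕ) [a.AtLeastTwo] :
    (OfNat.ofNat a : ℝ≥0∞)⁻¹ ^ n = ENNReal.ofReal ((OfNat.ofNat a : ℝ)⁻¹ ^ n) := by
  rw [ENNReal.ofReal_pow (by simp), ENNReal.ofReal_inv_of_pos Nat.ofNat_pos,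
    ENNReal.ofReal_ofNat]

theorem nuEx_apply {s : Set ℝ} (hs : MeasurableSet s) :
    nuEx s = ∑' n : ℕ, ((3 : ℝ≥0∞)⁻¹ ^ n * s.indicator 1 (-((2 : ℝ)⁻¹ ^ n)) +
      (2 : ℝ≥0∞)⁻¹ ^ n * s.indicator 1 ((2 : ℝ)⁻¹ ^ n)) := by
  simp only [nuEx, Measure.sum_apply _ hs, Measure.add_apply, Measure.smul_apply,
    Measure.dirac_apply' _ hs, smul_eq_mul]

theorem two_inv_pow_le_nuEx {s : Set ℝ} (hs : MeasurableSet s) {n : ℕ}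
    (hn : (2 : ℝ)⁻¹ ^ n ∈ s) : (2 : ℝ≥0∞)⁻¹ ^ n ≤ nuEx s := by
  rw [nuEx_apply hs]
  refine le_trans ?_ (ENNReal.le_tsum n)
  rw [indicator_of_mem hn, Pi.one_apply, mul_one]
  exact le_add_self

theorem neg_two_inv_pow_mem_Icc_iff {m n : ℕ} :
    -((2 : ℝ)⁻¹ ^ m) ∈ Icc (-((2 : ℝ)⁻¹ ^ n)) 0 ↔ n ≤ m := by
  rw [mem_Icc, neg_le_neg_iff, pow_le_pow_iff_right_of_lt_one₀ (by norm_num) (by norm_num)]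
  simp only [Left.neg_nonpos_iff, and_iff_left_iff_imp]
  intro; positivity

theorem two_inv_pow_notMem_Icc {a : ℝ} {m : ℕ} : (2 : ℝ)⁻¹ ^ m ∉ Icc a 0 :=
  fun h => (pow_pos (by norm_num) m).not_ge h.2

theorem nuEx_Icc_neg_two_inv_pow (n : ℕ) :
    nuEx (Icc (-((2 : ℝ)⁻¹ ^ n)) 0) = (3 : ℝ≥0∞)⁻¹ ^ n * (1 - 3⁻¹)⁻¹ := by
  rw [nuEx_apply measurableSet_Icc, ← ENNReal.summable.sum_add_tsum_nat_add' (k := n)]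
  simp only [indicator_of_notMem two_inv_pow_notMem_Icc, mul_zero, add_zero]
  have hhead : ∀ m ∈ Finset.range n,
      (3 : ℝ≥0∞)⁻¹ ^ m * (Icc (-((2 : ℝ)⁻¹ ^ n)) 0).indicator 1 (-((2 : ℝ)⁻¹ ^ m)) = 0 :=
    fun m hm => by
      rw [indicator_of_notMem (neg_two_inv_pow_mem_Icc_iff.not.2 (by simpa using hm)), mul_zero]
  have htail : ∀ m : ℕ,
      (3 : ℝ≥0∞)⁻¹ ^ (m + n) * (Icc (-((2 : ℝ)⁻¹ ^ n)) 0).indicator 1 (-((2 : ℝ)⁻¹ ^ (m + n)))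
        = 3⁻¹ ^ n * 3⁻¹ ^ m := fun m => by
    rw [indicator_of_mem (neg_two_inv_pow_mem_Icc_iff.2 (Nat.le_add_left n m)), Pi.one_apply,
      mul_one, pow_add, mul_comm]
  rw [Finset.sum_eq_zero hhead, zero_add, tsum_congr htail, ENNReal.tsum_mul_left,
    ENNReal.tsum_geometric]

/-- The measure `nuEx` is not doubling: for every `C ≥ 1` there are a point
`x` of `X` and a radius `r > 0` with `μ(B(x,2r)) > C μ(B(x,r))`. -/
theorem nuEx_not_doubling :
    ∀ C : ℝ, 1 ≤ C → ∃ x ∈ XEx, ∃ r : ℝ, 0 < r ∧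
      ENNReal.ofReal C * nuEx (closedBall x r) < nuEx (closedBall x (2 * r)) := by
  intro C hC
  obtain ⟨n, hn⟩ := pow_unbounded_of_one_lt (3 * C) (by norm_num : (1 : ℝ) < 3 / 2)
  set r : ℝ := 2⁻¹ ^ (n + 1) with hr
  refine ⟨-r, Or.inr (mem_iUnion.2 ⟨n + 1, Or.inr rfl⟩), r, by positivity, ?_⟩
  have hball : closedBall (-r) r = Icc (-((2 : ℝ)⁻¹ ^ n)) 0 := by
    rw [Real.closedBall_eq_Icc, neg_add_cancel, hr, pow_succ]
    ring_nf
  have hmem : r ∈ closedBall (-r) (2 * r) := by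
    rw [mem_closedBall, Real.dist_eq, sub_neg_eq_add, abs_of_pos (by positivity)]
    linarith
  have hgeom : (1 - (3 : ℝ≥0∞)⁻¹)⁻¹ = ENNReal.ofReal (3 / 2) := by
    rw [← ENNReal.ofReal_ofNat 3, ← ENNReal.ofReal_inv_of_pos (by norm_num), ← ENNReal.ofReal_one,
      ← ENNReal.ofReal_sub _ (by norm_num), ← ENNReal.ofReal_inv_of_pos (by norm_num)]
    norm_num
  refine lt_of_lt_of_le ?_ (two_inv_pow_le_nuEx measurableSet_closedBall hmem)
  rw [hball, nuEx_Icc_neg_two_inv_pow, hgeom, ENNReal.ofNat_inv_pow_eq_ofReal,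
    ENNReal.ofNat_inv_pow_eq_ofReal, ← ENNReal.ofReal_mul (by positivity),
    ← ENNReal.ofReal_mul (by linarith), ENNReal.ofReal_lt_ofReal_iff (by positivity)]
  have hratio : (3 / 2 : ℝ) ^ n * 3⁻¹ ^ n = 2⁻¹ ^ n := by rw [← mul_pow]; norm_num
  rw [pow_succ]
  nlinarith [pow_pos (by norm_num : (0 : ℝ) < 3⁻¹) n]
end

section
/- Let μ = Σ_{n=0}^∞ (3^{-n} δ_{-2^{-n}} + 2^{-n} δ_{2^{-n}}) be the finite Borel measure on ℝ fully supported on X = {0} ∪ ⋃_{n=0}^∞ {2^{-n}, -2^{-n}}, where δ_y denotes the point mass at y. Then μ is pointwise doubling at every point of X: for every x ∈ X there is a constant C(x) ≥ 1 such that μ(B(x,2r)) ≤ C(x) μ(B(x,r)) for all r > 0. -/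
/-!
Each point `±2⁻ⁿ` is an atom of the finite measure `μ`, so there `μ(ℝ) / μ{x}` is a doubling
constant for every radius. At `0`, balls are symmetric, and the mass `3⁻ⁿ` at `-2⁻ⁿ` is dominated
by the mass `2⁻ⁿ` at `2⁻ⁿ`, so `μ` is comparable to its positive part `μ₊ = Σ 2⁻ⁿ δ_{2⁻ⁿ}` on
these balls. Doubling the radius shifts the index of the atoms of `μ₊` by one, which doubles
their masses: `μ₊(B(0, 2r)) ≤ 2 μ₊(B(0, r))`. Hence `μ(B(0, 2r)) ≤ 4 μ(B(0, r))`.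
-/

open MeasureTheory Metric Set
open scoped NNReal ENNReal

def PointwiseDoublingAt {α : Type*} [PseudoMetricSpace α] [MeasurableSpace α]
    (μ : Measure α) (x : α) : Prop :=
  ∃ C : ℝ, 1 ≤ C ∧ ∀ r : ℝ, 0 < r →
    μ (closedBall x (2 * r)) ≤ ENNReal.ofReal C * μ (closedBall x r)

theorem pointwiseDoublingAt_of_measure_singleton_ne_zero {α : Type*} [PseudoMetricSpace α]
    [MeasurableSpace α] {μ : Measure α} [IsFiniteMeasure μ] {x : α} (hx : μ {x} ≠ 0) :
    PointwiseDoublingAt μ x := by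
  set q := μ univ / μ {x}
  have hq : q ≠ ∞ := (ENNReal.div_lt_top (measure_ne_top μ univ) hx).ne
  refine ⟨max 1 q.toReal, le_max_left _ _, fun r hr => ?_⟩
  calc μ (closedBall x (2 * r)) ≤ μ univ := measure_mono (subset_univ _)
    _ = q * μ {x} := (ENNReal.div_mul_cancel hx (measure_ne_top μ _)).symm
    _ ≤ ENNReal.ofReal (max 1 q.toReal) * μ (closedBall x r) := by
      gcongr
      · exact (ENNReal.ofReal_toReal hq).ge.trans (ENNReal.ofReal_le_ofReal (le_max_right _ _))
      · exact singleton_subset_iff.2 (mem_closedBall_self hr.le)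

namespace MeasureTheory.Measure

variable {ι α : Type*} [MeasurableSpace α] (c : ι → ℝ≥0∞) (a : ι → α)

theorem sum_smul_dirac_apply {s : Set α} (hs : MeasurableSet s) :
    sum (fun i => c i • dirac (a i)) s = ∑' i, c i * s.indicator 1 (a i) := by
  simp only [sum_apply _ hs, smul_apply, dirac_apply' _ hs, smul_eq_mul]

theorem sum_smul_dirac_apply_univ : sum (fun i => c i • dirac (a i)) univ = ∑' i, c i := by
  simp [sum_smul_dirac_apply c a MeasurableSet.univ]

theorem isFiniteMeasure_sum_smul_dirac (h : ∑' i, c i ≠ ∞) :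
    IsFiniteMeasure (sum fun i => c i • dirac (a i)) :=
  ⟨by rw [sum_smul_dirac_apply_univ]; exact h.lt_top⟩

theorem le_sum_smul_dirac_apply {s : Set α} (i : ι) (h : a i ∈ s) :
    c i ≤ sum (fun i => c i • dirac (a i)) s := by
  simpa [dirac_apply_of_mem h] using le_sum (fun i => c i • dirac (a i)) i s

end MeasureTheory.Measure

noncomputable def nuExPos : Measure ℝ :=
  Measure.sum fun n : ℕ => (2 : ℝ≥0∞)⁻¹ ^ n • Measure.dirac ((2 : ℝ)⁻¹ ^ n)

noncomputable def nuExNeg : Measure ℝ :=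
  Measure.sum fun n : ℕ => (3 : ℝ≥0∞)⁻¹ ^ n • Measure.dirac (-((2 : ℝ)⁻¹ ^ n))

theorem nuEx_eq_add : nuEx = nuExNeg + nuExPos :=
  (Measure.sum_add_sum _ _).symm

instance : IsFiniteMeasure nuExPos :=
  Measure.isFiniteMeasure_sum_smul_dirac _ _
    (tsum_geometric_lt_top.2 (ENNReal.inv_lt_one.2 (by norm_num))).ne

instance : IsFiniteMeasure nuExNeg :=
  Measure.isFiniteMeasure_sum_smul_dirac _ _
    (tsum_geometric_lt_top.2 (ENNReal.inv_lt_one.2 (by norm_num))).ne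

instance : IsFiniteMeasure nuEx := by
  rw [nuEx_eq_add]
  infer_instance

theorem nuExPos_le_nuEx : nuExPos ≤ nuEx :=
  nuEx_eq_add ▸ Measure.le_add_left le_rfl

theorem nuExNeg_le_nuEx : nuExNeg ≤ nuEx :=
  nuEx_eq_add ▸ Measure.le_add_right le_rfl

theorem nuEx_singleton_pow_ne_zero (n : ℕ) : nuEx {(2 : ℝ)⁻¹ ^ n} ≠ 0 :=
  ne_bot_of_le_ne_bot (pow_ne_zero n (ENNReal.inv_ne_zero.2 ENNReal.ofNat_ne_top)) <|
    (Measure.le_sum_smul_dirac_apply _ _ n (mem_singleton _)).trans (nuExPos_le_nuEx _)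

theorem nuEx_singleton_neg_pow_ne_zero (n : ℕ) : nuEx {-((2 : ℝ)⁻¹ ^ n)} ≠ 0 :=
  ne_bot_of_le_ne_bot (pow_ne_zero n (ENNReal.inv_ne_zero.2 ENNReal.ofNat_ne_top)) <|
    (Measure.le_sum_smul_dirac_apply _ _ n (mem_singleton _)).trans (nuExNeg_le_nuEx _)

theorem nuExNeg_closedBall_zero_le (r : ℝ) :
    nuExNeg (closedBall 0 r) ≤ nuExPos (closedBall 0 r) := by
  rw [nuExNeg, nuExPos, Measure.sum_smul_dirac_apply _ _ measurableSet_closedBall,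
    Measure.sum_smul_dirac_apply _ _ measurableSet_closedBall]
  refine ENNReal.tsum_le_tsum fun n => ?_
  have hsymm : (closedBall (0 : ℝ) r).indicator (1 : ℝ → ℝ≥0∞) (-((2 : ℝ)⁻¹ ^ n)) =
      (closedBall (0 : ℝ) r).indicator 1 ((2 : ℝ)⁻¹ ^ n) := by
    simp only [indicator, mem_closedBall_zero_iff, norm_neg, Pi.one_apply]
  rw [hsymm]
  exact mul_le_mul_left (pow_le_pow_left' (ENNReal.inv_le_inv.2 (by norm_num)) n) _

theorem nuExPos_closedBall_zero_two_mul_le (r : ℝ) :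
    nuExPos (closedBall 0 (2 * r)) ≤ 2 * nuExPos (closedBall 0 r) := by
  set f : ℕ → ℝ≥0∞ := fun n =>
    (2 : ℝ≥0∞)⁻¹ ^ n * (closedBall (0 : ℝ) r).indicator 1 ((2 : ℝ)⁻¹ ^ n)
  have hmem (n : ℕ) :
      (2 : ℝ)⁻¹ ^ n ∈ closedBall 0 (2 * r) ↔ (2 : ℝ)⁻¹ ^ (n + 1) ∈ closedBall 0 r := by
    rw [mem_closedBall_zero_iff, mem_closedBall_zero_iff, Real.norm_of_nonneg (by positivity),
      Real.norm_of_nonneg (by positivity), pow_succ]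
    constructor <;> intro h <;> linarith
  have hmass (n : ℕ) : (2 : ℝ≥0∞)⁻¹ ^ n = 2 * 2⁻¹ ^ (n + 1) := by
    rw [pow_succ, mul_comm, mul_assoc, ENNReal.inv_mul_cancel two_ne_zero ENNReal.ofNat_ne_top,
      mul_one]
  have hind (n : ℕ) : (closedBall (0 : ℝ) (2 * r)).indicator (1 : ℝ → ℝ≥0∞) ((2 : ℝ)⁻¹ ^ n) =
      (closedBall (0 : ℝ) r).indicator 1 ((2 : ℝ)⁻¹ ^ (n + 1)) := by
    classical
    simp only [indicator, Pi.one_apply]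
    exact if_congr (hmem n) rfl rfl
  have hshift (n : ℕ) :
      (2 : ℝ≥0∞)⁻¹ ^ n * (closedBall (0 : ℝ) (2 * r)).indicator 1 ((2 : ℝ)⁻¹ ^ n) =
        2 * f (n + 1) := by
    rw [hmass n, hind n, mul_assoc]
  calc nuExPos (closedBall 0 (2 * r)) = ∑' n, 2 * f (n + 1) := by
        rw [nuExPos, Measure.sum_smul_dirac_apply _ _ measurableSet_closedBall]
        exact tsum_congr hshift
    _ = 2 * ∑' n, f (n + 1) := ENNReal.tsum_mul_left
    _ ≤ 2 * ∑' n, f n :=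
        mul_le_mul_right (ENNReal.tsum_comp_le_tsum_of_injective (add_left_injective 1) f) 2
    _ = 2 * nuExPos (closedBall 0 r) := by
        rw [nuExPos, Measure.sum_smul_dirac_apply _ _ measurableSet_closedBall]

theorem nuEx_closedBall_zero_two_mul_le (r : ℝ) :
    nuEx (closedBall 0 (2 * r)) ≤ 4 * nuEx (closedBall 0 r) :=
  calc nuEx (closedBall 0 (2 * r))
      = nuExNeg (closedBall 0 (2 * r)) + nuExPos (closedBall 0 (2 * r)) := by
        rw [nuEx_eq_add, Measure.add_apply]
    _ ≤ 2 * nuExPos (closedBall 0 (2 * r)) := by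
        rw [two_mul (nuExPos _)]
        exact add_le_add (nuExNeg_closedBall_zero_le _) le_rfl
    _ ≤ 2 * (2 * nuExPos (closedBall 0 r)) :=
        mul_le_mul_right (nuExPos_closedBall_zero_two_mul_le r) 2
    _ ≤ 4 * nuEx (closedBall 0 r) := by
        rw [← mul_assoc, show (2 : ℝ≥0∞) * 2 = 4 by norm_num]
        gcongr
        exact nuExPos_le_nuEx

/-- The measure `nuEx` is pointwise doubling at every point of its support:
for every `x ∈ X` there is `C(x) ≥ 1` with `μ(B(x,2r)) ≤ C(x) μ(B(x,r))` for all `r > 0`. -/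
theorem nuEx_pointwise_doubling :
    ∀ x ∈ XEx, ∃ C : ℝ, 1 ≤ C ∧ ∀ r : ℝ, 0 < r →
      nuEx (closedBall x (2 * r)) ≤ ENNReal.ofReal C * nuEx (closedBall x r) := by
  rintro x (rfl | hx)
  · refine ⟨4, by norm_num, fun r _ => ?_⟩
    rw [ENNReal.ofReal_ofNat]
    exact nuEx_closedBall_zero_two_mul_le r
  · obtain ⟨n, rfl | rfl⟩ : ∃ n : ℕ, x = (2 : ℝ)⁻¹ ^ n ∨ x = -((2 : ℝ)⁻¹ ^ n) := by
      simpa using hx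
    exacts [pointwiseDoublingAt_of_measure_singleton_ne_zero (nuEx_singleton_pow_ne_zero n),
      pointwiseDoublingAt_of_measure_singleton_ne_zero (nuEx_singleton_neg_pow_ne_zero n)]
end

section
/- Let Λ be a finite set, Σ = Λ^ℕ with the left shift σ, and let ν be a quasi-Bernoulli Borel probability measure on Σ. Then there exists a σ-invariant, ergodic, quasi-Bernoulli Borel probability measure ν' on Σ which is equivalent to ν (ν ≪ ν' and ν' ≪ ν); indeed there is a constant K ≥ 1 with K^{-1} ν([𝐢]) ≤ ν'([𝐢]) ≤ K ν([𝐢]) for every finite word 𝐢. -/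
/-!
The push-forwards `σ^k_* ν` are comparable with `ν` on cylinders, with the quasi-Bernoulli
constant `C`, because `ν(σ^{-k}[v]) = ∑_{|u| = k} ν[uv]` and `∑_{|u| = k} ν[u] = 1`. Comparison
on cylinders extends to all Borel sets by outer regularity, so the Cesàro averages of the
push-forwards are uniformly comparable with `ν`. Their setwise limit along an ultrafilter is
countably additive because it is dominated by `C ν`, and it is shift-invariant and still
comparable with `ν`.

For ergodicity, the lower quasi-Bernoulli bound gives `ν[w] ν(B) ≤ C ν([w] ∩ σ^{-|w|} B)`. For
an invariant set `s` this says `ν(s) ν ≤ C ν|_s`, and evaluating at `sᶜ` gives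
`ν(s) ν(sᶜ) = 0`; this passes to the equivalent measure `ν'`.
-/

open MeasureTheory Set
open scoped NNReal ENNReal

/-- The cylinder `[w]` of infinite words starting with the finite word `w`. -/
def cylinder {Λ : Type*} (w : List Λ) : Set (ℕ → Λ) := {x | ∀ k : Fin w.length, x k = w.get k}

/-- A quasi-Bernoulli measure on `Σ = Λ^ℕ`: there is `1 ≤ C < ∞` with
`C⁻¹ ν[𝐢]ν[𝐣] ≤ ν[𝐢𝐣] ≤ C ν[𝐢]ν[𝐣]` for all finite words `𝐢, 𝐣`. -/
def IsQuasiBernoulli {Λ : Type*} [MeasurableSpace Λ] (ν : Measure (ℕ → Λ)) : Prop :=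
  ∃ C : ℝ≥0∞, 1 ≤ C ∧ C < ⊤ ∧ ∀ w v : List Λ,
    ν (cylinder w) * ν (cylinder v) ≤ C * ν (cylinder (w ++ v)) ∧
    ν (cylinder (w ++ v)) ≤ C * (ν (cylinder w) * ν (cylinder v))

/-- The left shift `σ` on `Σ = Λ^ℕ`. -/
def shift {Λ : Type*} (x : ℕ → Λ) : ℕ → Λ := fun n => x (n + 1)

open Filter Topology

section Cylinders

variable {Λ : Type*}

theorem shift_iterate_apply (m : ℕ) (x : ℕ → Λ) (n : ℕ) : shift^[m] x n = x (n + m) := by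
  induction m generalizing x with
  | zero => rfl
  | succ m ih => rw [Function.iterate_succ_apply, ih]; rfl

theorem mem_cylinder_iff {w : List Λ} {x : ℕ → Λ} :
    x ∈ cylinder w ↔ ∀ k (hk : k < w.length), x k = w[k] :=
  ⟨fun h k hk => h ⟨k, hk⟩, fun h k => h k k.2⟩

theorem cylinder_append (w v : List Λ) :
    cylinder (w ++ v) = cylinder w ∩ shift^[w.length] ⁻¹' cylinder v := by
  ext x
  simp only [mem_inter_iff, mem_preimage, mem_cylinder_iff, shift_iterate_apply,
    List.length_append]
  constructor
  · intro h
    refine ⟨fun k hk => ?_, fun k hk => ?_⟩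
    · simpa [List.getElem_append_left hk] using h k (by omega)
    · simpa [List.getElem_append_right, Nat.add_comm k] using h (w.length + k) (by omega)
  · rintro ⟨h₁, h₂⟩ k hk
    rcases lt_or_ge k w.length with hkw | hkw
    · rw [List.getElem_append_left hkw]; exact h₁ k hkw
    · rw [List.getElem_append_right hkw]
      simpa [Nat.sub_add_cancel hkw] using h₂ (k - w.length) (by omega)

def truncate (n : ℕ) (x : ℕ → Λ) : Fin n → Λ := fun k => x k

theorem cylinder_ofFn {n : ℕ} (f : Fin n → Λ) :
    cylinder (List.ofFn f) = truncate n ⁻¹' {f} := by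
  ext x
  simp [mem_cylinder_iff, truncate, funext_iff, Fin.forall_iff]

theorem PiNat.cylinder_eq_preimage_truncate (x : ℕ → Λ) (n : ℕ) :
    PiNat.cylinder x n = truncate n ⁻¹' {truncate n x} := by
  ext y
  simp [PiNat.mem_cylinder_iff, truncate, funext_iff, Fin.forall_iff]

end Cylinders

section Comparison

variable {Λ : Type*} [MeasurableSpace Λ]

theorem measurable_shift : Measurable (shift : (ℕ → Λ) → ℕ → Λ) :=
  measurable_pi_lambda _ fun n => measurable_pi_apply (n + 1)

theorem measurable_truncate (n : ℕ) : Measurable (truncate n : (ℕ → Λ) → Fin n → Λ) :=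
  measurable_pi_lambda _ fun _ => measurable_pi_apply _

variable [MeasurableSingletonClass Λ]

theorem measurableSet_truncate_preimage_singleton {n : ℕ} (f : Fin n → Λ) :
    MeasurableSet (truncate n ⁻¹' {f}) :=
  measurable_truncate n (measurableSet_singleton f)

theorem measurableSet_cylinder (w : List Λ) : MeasurableSet (cylinder w) := by
  have h := cylinder_ofFn w.get
  rw [List.ofFn_get] at h
  exact h ▸ measurableSet_truncate_preimage_singleton w.get

variable [Countable Λ]

theorem measure_eq_tsum_cylinder_inter (μ : Measure (ℕ → Λ)) (n : ℕ) (A : Set (ℕ → Λ)) :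
    μ A = ∑' f : Fin n → Λ, μ (cylinder (List.ofFn f) ∩ A) := by
  have := tsum_measure_preimage_singleton (μ := μ.restrict A) countable_univ
    fun f _ => measurableSet_truncate_preimage_singleton (n := n) f
  simp only [preimage_univ, Measure.restrict_apply_univ,
    Measure.restrict_apply (measurableSet_truncate_preimage_singleton _)] at this
  rw [← this, tsum_univ fun f => μ (truncate n ⁻¹' {f} ∩ A)]
  simp only [cylinder_ofFn]

theorem measure_truncate_preimage_le {μ ν : Measure (ℕ → Λ)}
    (h : ∀ w, μ (cylinder w) ≤ ν (cylinder w)) {n : ℕ} (S : Set (Fin n → Λ)) :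
    μ (truncate n ⁻¹' S) ≤ ν (truncate n ⁻¹' S) := by
  have hS := fun f (_ : f ∈ S) => measurableSet_truncate_preimage_singleton f
  rw [← tsum_measure_preimage_singleton S.to_countable hS,
    ← tsum_measure_preimage_singleton S.to_countable hS]
  exact ENNReal.tsum_le_tsum fun f => by simpa only [cylinder_ofFn] using h (List.ofFn f.1)

theorem measure_isOpen_le_of_forall_cylinder_le [TopologicalSpace Λ] [DiscreteTopology Λ]
    {μ ν : Measure (ℕ → Λ)} (h : ∀ w, μ (cylinder w) ≤ ν (cylinder w))
    {U : Set (ℕ → Λ)} (hU : IsOpen U) : μ U ≤ ν U := by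
  set D : ℕ → Set (ℕ → Λ) := fun n => {x | PiNat.cylinder x n ⊆ U}
  have hD : ∀ n, D n = truncate n ⁻¹' {f | truncate n ⁻¹' {f} ⊆ U} := fun n => by
    ext x; simp [D, PiNat.cylinder_eq_preimage_truncate]
  have hmono : Monotone D := fun m n hmn x hx => (PiNat.cylinder_anti x hmn).trans hx
  have hUD : ⋃ n, D n = U := by
    refine subset_antisymm (iUnion_subset fun n x hx => hx (PiNat.self_mem_cylinder x n))
      fun x hx => ?_
    obtain ⟨_, ⟨y, n, rfl⟩, hxy, hyU⟩ :=
      (PiNat.isTopologicalBasis_cylinders _).exists_subset_of_mem_open hx hU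
    refine mem_iUnion.2 ⟨n, ?_⟩
    rwa [← PiNat.mem_cylinder_iff_eq.1 hxy] at hyU
  rw [← hUD, hmono.measure_iUnion, hmono.measure_iUnion]
  exact iSup_mono fun n => hD n ▸ measure_truncate_preimage_le h _

theorem le_of_forall_cylinder_le {μ ν : Measure (ℕ → Λ)} [IsFiniteMeasure ν]
    (h : ∀ w, μ (cylinder w) ≤ ν (cylinder w)) : μ ≤ ν := by
  let _ : TopologicalSpace Λ := ⊥
  have _ : DiscreteTopology Λ := ⟨rfl⟩
  refine Measure.le_iff'.2 fun A => ?_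
  rw [A.measure_eq_iInf_isOpen ν]
  exact le_iInf₂ fun U hAU => le_iInf fun hU =>
    (measure_mono hAU).trans (measure_isOpen_le_of_forall_cylinder_le h hU)

theorem le_smul_of_forall_cylinder_le {μ₁ μ₂ : Measure (ℕ → Λ)} [IsFiniteMeasure μ₂]
    {C : ℝ≥0∞} (hC : C ≠ ⊤) (h : ∀ w, μ₁ (cylinder w) ≤ C * μ₂ (cylinder w)) : μ₁ ≤ C • μ₂ :=
  have := μ₂.smul_finite hC
  le_of_forall_cylinder_le fun w => by simpa using h w

end Comparison

section QuasiBernoulli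

variable {Λ : Type*} [MeasurableSpace Λ] [MeasurableSingletonClass Λ] [Countable Λ]
  {ν : Measure (ℕ → Λ)} {C : ℝ≥0∞}

theorem tsum_measure_cylinder_ofFn (μ : Measure (ℕ → Λ)) (n : ℕ) :
    ∑' f : Fin n → Λ, μ (cylinder (List.ofFn f)) = μ univ := by
  simpa using (measure_eq_tsum_cylinder_inter μ n univ).symm

theorem measure_preimage_shift_iterate_cylinder (μ : Measure (ℕ → Λ)) (n : ℕ) (v : List Λ) :
    μ (shift^[n] ⁻¹' cylinder v) = ∑' f : Fin n → Λ, μ (cylinder (List.ofFn f ++ v)) := by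
  rw [measure_eq_tsum_cylinder_inter μ n]
  simp only [cylinder_append, List.length_ofFn]

theorem map_shift_iterate_le_smul [IsProbabilityMeasure ν] (hC : C ≠ ⊤)
    (hν : ∀ w v, ν (cylinder (w ++ v)) ≤ C * (ν (cylinder w) * ν (cylinder v))) (n : ℕ) :
    ν.map shift^[n] ≤ C • ν := by
  refine le_smul_of_forall_cylinder_le hC fun v => ?_
  rw [Measure.map_apply (measurable_shift.iterate n) (measurableSet_cylinder v),
    measure_preimage_shift_iterate_cylinder]
  calc ∑' f : Fin n → Λ, ν (cylinder (List.ofFn f ++ v))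
      ≤ ∑' f : Fin n → Λ, C * (ν (cylinder (List.ofFn f)) * ν (cylinder v)) :=
        ENNReal.tsum_le_tsum fun f => hν _ _
    _ = C * ν (cylinder v) := by
        rw [ENNReal.tsum_mul_left, ENNReal.tsum_mul_right, tsum_measure_cylinder_ofFn,
          measure_univ, one_mul]

theorem le_smul_map_shift_iterate [IsProbabilityMeasure ν] (hC : C ≠ ⊤)
    (hν : ∀ w v, ν (cylinder w) * ν (cylinder v) ≤ C * ν (cylinder (w ++ v))) (n : ℕ) :
    ν ≤ C • ν.map shift^[n] := by
  refine le_smul_of_forall_cylinder_le hC fun v => ?_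
  rw [Measure.map_apply (measurable_shift.iterate n) (measurableSet_cylinder v),
    measure_preimage_shift_iterate_cylinder, ← ENNReal.tsum_mul_left]
  calc ν (cylinder v) = ∑' f : Fin n → Λ, ν (cylinder (List.ofFn f)) * ν (cylinder v) := by
        rw [ENNReal.tsum_mul_right, tsum_measure_cylinder_ofFn, measure_univ, one_mul]
    _ ≤ _ := ENNReal.tsum_le_tsum fun f => hν _ _

theorem smul_le_map_restrict_cylinder [IsFiniteMeasure ν] (hC : C ≠ ⊤)
    (hν : ∀ w v, ν (cylinder w) * ν (cylinder v) ≤ C * ν (cylinder (w ++ v))) (w : List Λ) :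
    ν (cylinder w) • ν ≤ C • (ν.restrict (cylinder w)).map shift^[w.length] := by
  refine le_smul_of_forall_cylinder_le hC fun v => ?_
  rw [Measure.smul_apply, smul_eq_mul,
    Measure.map_apply (measurable_shift.iterate _) (measurableSet_cylinder v),
    Measure.restrict_apply (measurable_shift.iterate _ (measurableSet_cylinder v)), inter_comm,
    ← cylinder_append]
  exact hν w v

theorem preErgodic_shift [IsFiniteMeasure ν] (hC : C ≠ ⊤)
    (hν : ∀ w v, ν (cylinder w) * ν (cylinder v) ≤ C * ν (cylinder (w ++ v))) :
    PreErgodic shift ν := by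
  refine ⟨fun s hs hinv => ?_⟩
  have hcyl : ν s • ν ≤ C • ν.restrict s := by
    refine le_smul_of_forall_cylinder_le hC fun w => ?_
    have := Measure.le_iff'.1 (smul_le_map_restrict_cylinder hC hν w) s
    rw [Measure.smul_apply, Measure.smul_apply, smul_eq_mul, smul_eq_mul,
      Measure.map_apply (measurable_shift.iterate _) hs,
      Function.IsFixedPt.preimage_iterate hinv, Measure.restrict_apply hs] at this
    rwa [Measure.smul_apply, smul_eq_mul, Measure.restrict_apply (measurableSet_cylinder w),
      inter_comm, mul_comm]
  have := Measure.le_iff'.1 hcyl sᶜ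
  rw [Measure.smul_apply, Measure.smul_apply, smul_eq_mul, smul_eq_mul,
    Measure.restrict_apply hs.compl, compl_inter_self, measure_empty, mul_zero,
    nonpos_iff_eq_zero] at this
  rw [eventuallyConst_set', ae_eq_empty, ae_eq_univ]
  exact mul_eq_zero.1 this

end QuasiBernoulli

theorem IsQuasiBernoulli.of_le_smul {Λ : Type*} [MeasurableSpace Λ] {ν ν' : Measure (ℕ → Λ)}
    (hν : IsQuasiBernoulli ν)
    {K : ℝ≥0∞} (hK1 : 1 ≤ K) (hK : K ≠ ⊤) (h : ν ≤ K • ν') (h' : ν' ≤ K • ν) :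
    IsQuasiBernoulli ν' := by
  obtain ⟨C, hC1, hC, hQB⟩ := hν
  have h (A) : ν A ≤ K * ν' A := Measure.le_iff'.1 h A
  have h' (A) : ν' A ≤ K * ν A := Measure.le_iff'.1 h' A
  refine ⟨K ^ 3 * C, one_le_mul (one_le_pow₀ hK1) hC1,
    ENNReal.mul_lt_top (ENNReal.pow_lt_top hK.lt_top) hC, fun w v => ⟨?_, ?_⟩⟩
  · calc ν' (cylinder w) * ν' (cylinder v)
        ≤ (K * ν (cylinder w)) * (K * ν (cylinder v)) := by gcongr <;> apply h'
      _ = K ^ 2 * (ν (cylinder w) * ν (cylinder v)) := by ring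
      _ ≤ K ^ 2 * (C * ν (cylinder (w ++ v))) := mul_le_mul_right (hQB w v).1 _
      _ ≤ K ^ 2 * (C * (K * ν' (cylinder (w ++ v)))) := by gcongr; apply h
      _ = K ^ 3 * C * ν' (cylinder (w ++ v)) := by ring
  · calc ν' (cylinder (w ++ v)) ≤ K * (C * (ν (cylinder w) * ν (cylinder v))) :=
          (h' _).trans (by gcongr; exact (hQB w v).2)
      _ ≤ K * (C * ((K * ν' (cylinder w)) * (K * ν' (cylinder v)))) := by
          gcongr <;> apply h
      _ = K ^ 3 * C * (ν' (cylinder w) * ν' (cylinder v)) := by ring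

theorem MeasureTheory.PreErgodic.of_absolutelyContinuous {α : Type*} [MeasurableSpace α]
    {f : α → α} {μ ν : Measure α} (hf : PreErgodic f μ) (h : ν ≪ μ) : PreErgodic f ν :=
  ⟨fun _ hs hfs => (hf.aeconst_set hs hfs).anti h.ae_le⟩

section InvariantMeasure

variable {α : Type*} [MeasurableSpace α]

theorem exists_measure_tendsto_of_le {ι : Type*} (𝒰 : Ultrafilter ι) {μ : ι → Measure α}
    {ν : Measure α} [IsFiniteMeasure ν] (h : ∀ i, μ i ≤ ν) :
    ∃ ρ : Measure α, ∀ A, MeasurableSet A → Tendsto (fun i => μ i A) 𝒰 (𝓝 (ρ A)) := by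
  set L : Set α → ℝ≥0∞ := fun A => (𝒰.map fun i => μ i A).lim
  have hL (A : Set α) : Tendsto (fun i => μ i A) 𝒰 (𝓝 (L A)) := (𝒰.map _).le_nhds_lim
  have hL_le (A : Set α) : L A ≤ ν A := le_of_tendsto' (hL A) fun i => h i A
  have hL_union {A B : Set α} (hB : MeasurableSet B) (hAB : Disjoint A B) :
      L (A ∪ B) = L A + L B :=
    tendsto_nhds_unique (hL _) (((hL A).add (hL B)).congr fun i => (measure_union hAB hB).symm)
  refine ⟨Measure.ofMeasurable (fun A _ => L A)
    (tendsto_nhds_unique (hL ∅) (by simp)) fun g hg hdisj => ?_,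
    fun A hA => by rw [Measure.ofMeasurable_apply A hA]; exact hL A⟩
  have hL_finset (N : ℕ) : L (⋃ i ∈ Finset.range N, g i) = ∑ i ∈ Finset.range N, L (g i) :=
    tendsto_nhds_unique (hL _) <| (tendsto_finsetSum _ fun i _ => hL (g i)).congr fun n =>
      (measure_biUnion_finset (hdisj.set_pairwise _) fun i _ => hg i).symm
  have hL_tail : Tendsto (fun N => L (⋃ i ≥ N, g i)) atTop (𝓝 0) :=
    tendsto_of_tendsto_of_tendsto_of_le_of_le tendsto_const_nhds
      (tendsto_measure_biUnion_Ici_zero_of_pairwise_disjoint (fun i => (hg i).nullMeasurableSet)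
        hdisj) (fun _ => zero_le) fun N => hL_le _
  have hsplit (N : ℕ) : L (⋃ i, g i) = ∑ i ∈ Finset.range N, L (g i) + L (⋃ i ≥ N, g i) := by
    rw [← hL_finset, ← hL_union (.iUnion fun i => .iUnion fun _ => hg i)]
    · congr 1
      ext x
      simp only [mem_iUnion, mem_union, Finset.mem_range, exists_prop]
      exact ⟨fun ⟨i, hi⟩ => (lt_or_ge i N).imp (⟨i, ·, hi⟩) (⟨i, ·, hi⟩), by
        rintro (⟨i, -, hi⟩ | ⟨i, -, hi⟩) <;> exact ⟨i, hi⟩⟩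
    · refine disjoint_iUnion₂_left.2 fun i hi => disjoint_iUnion₂_right.2 fun j hj =>
        hdisj (by simp only [Finset.mem_range] at hi; omega)
  have := (ENNReal.tendsto_nat_tsum fun i => L (g i)).add hL_tail
  rw [add_zero] at this
  exact tendsto_nhds_unique (tendsto_const_nhds.congr hsplit) this

theorem ENNReal.inv_mul_sum_range_const (n : ℕ) (a : ℝ≥0∞) :
    ((n : ℝ≥0∞) + 1)⁻¹ * ∑ _k ∈ Finset.range (n + 1), a = a := by
  rw [Finset.sum_const, Finset.card_range, nsmul_eq_mul, Nat.cast_succ,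
    ENNReal.inv_mul_cancel_left (by simp) (by simp)]

noncomputable def cesaroMeasure (T : α → α) (ν : Measure α) (n : ℕ) : Measure α :=
  ((n : ℝ≥0∞) + 1)⁻¹ • ∑ k ∈ Finset.range (n + 1), ν.map T^[k]

variable {T : α → α} {ν : Measure α}

theorem cesaroMeasure_apply (T : α → α) (ν : Measure α) (n : ℕ) (A : Set α) :
    cesaroMeasure T ν n A = ((n : ℝ≥0∞) + 1)⁻¹ * ∑ k ∈ Finset.range (n + 1), ν.map T^[k] A := by
  simp [cesaroMeasure]

theorem cesaroMeasure_le {ρ : Measure α} (h : ∀ k, ν.map T^[k] ≤ ρ) (n : ℕ) :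
    cesaroMeasure T ν n ≤ ρ := by
  refine Measure.le_iff'.2 fun A => ?_
  calc cesaroMeasure T ν n A
      ≤ ((n : ℝ≥0∞) + 1)⁻¹ * ∑ _k ∈ Finset.range (n + 1), ρ A := by
        rw [cesaroMeasure_apply]; gcongr with k; exact h k
    _ = ρ A := ENNReal.inv_mul_sum_range_const n _

theorem le_smul_cesaroMeasure {ρ : Measure α} {C : ℝ≥0∞} (h : ∀ k, ρ ≤ C • ν.map T^[k])
    (n : ℕ) : ρ ≤ C • cesaroMeasure T ν n := by
  refine Measure.le_iff'.2 fun A => ?_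
  calc ρ A = ((n : ℝ≥0∞) + 1)⁻¹ * ∑ _k ∈ Finset.range (n + 1), ρ A :=
        (ENNReal.inv_mul_sum_range_const n _).symm
    _ ≤ ((n : ℝ≥0∞) + 1)⁻¹ * ∑ k ∈ Finset.range (n + 1), C * ν.map T^[k] A := by
        gcongr with k; exact h k A
    _ = (C • cesaroMeasure T ν n) A := by
        rw [Measure.smul_apply, smul_eq_mul, cesaroMeasure_apply, ← Finset.mul_sum]; ring

theorem isProbabilityMeasure_cesaroMeasure [IsProbabilityMeasure ν] (hT : Measurable T)
    (n : ℕ) : IsProbabilityMeasure (cesaroMeasure T ν n) := by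
  constructor
  simp_rw [cesaroMeasure_apply, Measure.map_apply (hT.iterate _) MeasurableSet.univ,
    preimage_univ, measure_univ, ENNReal.inv_mul_sum_range_const]

-- `μₙ(T⁻¹ A) - μₙ(A) = (n + 1)⁻¹ (ν(T^{-(n+1)} A) - ν(A))` for `μₙ = cesaroMeasure T ν n`,
-- written without subtraction in `ℝ≥0∞`.
theorem cesaroMeasure_preimage_add (hT : Measurable T) (n : ℕ) {A : Set α}
    (hA : MeasurableSet A) :
    cesaroMeasure T ν n (T ⁻¹' A) + ((n : ℝ≥0∞) + 1)⁻¹ * ν A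
      = cesaroMeasure T ν n A + ((n : ℝ≥0∞) + 1)⁻¹ * ν (T^[n + 1] ⁻¹' A) := by
  simp only [cesaroMeasure_apply, Measure.map_apply (hT.iterate _) (hT hA),
    Measure.map_apply (hT.iterate _) hA, ← preimage_comp, ← Function.iterate_succ', ← mul_add]
  rw [Finset.sum_range_succ, Finset.sum_range_succ' (fun k => ν (T^[k] ⁻¹' A))]
  simp only [Function.iterate_zero, preimage_id_eq, id_eq]
  ring

theorem exists_measurePreserving_le_smul (hT : Measurable T) (ν : Measure α)
    [IsProbabilityMeasure ν] {C : ℝ≥0∞} (hC : C ≠ ⊤) (hup : ∀ k, ν.map T^[k] ≤ C • ν)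
    (hlow : ∀ k, ν ≤ C • ν.map T^[k]) :
    ∃ ν' : Measure α, IsProbabilityMeasure ν' ∧ MeasurePreserving T ν' ν' ∧
      ν' ≤ C • ν ∧ ν ≤ C • ν' := by
  have := ν.smul_finite hC
  set 𝒰 : Ultrafilter ℕ := .of atTop
  obtain ⟨ν', hν'⟩ := exists_measure_tendsto_of_le 𝒰 (cesaroMeasure_le hup)
  have hsmall (B : ℕ → Set α) :
      Tendsto (fun n : ℕ => ((n : ℝ≥0∞) + 1)⁻¹ * ν (B n)) 𝒰 (𝓝 0) := by
    refine tendsto_of_tendsto_of_tendsto_of_le_of_le tendsto_const_nhds ?_ (fun _ => zero_le)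
      fun n => mul_le_of_le_one_right' prob_le_one
    refine Tendsto.mono_left ?_ (Ultrafilter.of_le atTop)
    exact (ENNReal.tendsto_inv_nat_nhds_zero.comp (tendsto_add_atTop_nat 1)).congr fun n => by
      simp
  refine ⟨ν', ⟨?_⟩, ⟨hT, Measure.ext fun A hA => ?_⟩, Measure.le_iff.2 fun A hA => ?_,
    Measure.le_iff.2 fun A hA => ?_⟩
  · have := isProbabilityMeasure_cesaroMeasure (ν := ν) hT
    exact tendsto_nhds_unique (hν' _ .univ) (by simp)
  · have h₁ := (hν' _ (hT hA)).add (hsmall fun _ => A)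
    have h₂ := ((hν' _ hA).add (hsmall fun n => T^[n + 1] ⁻¹' A)).congr fun n =>
      (cesaroMeasure_preimage_add hT n hA).symm
    rw [add_zero] at h₁ h₂
    rw [Measure.map_apply hT hA]
    exact tendsto_nhds_unique h₁ h₂
  · exact le_of_tendsto' (hν' A hA) fun n => cesaroMeasure_le hup n A
  · exact ge_of_tendsto' (ENNReal.Tendsto.const_mul (hν' A hA) (.inr hC))
      fun n => le_smul_cesaroMeasure hlow n A

end InvariantMeasure

theorem quasiBernoulli_equivalent_invariant_ergodic_general
    {Λ : Type*} [Fintype Λ] [MeasurableSpace Λ] [MeasurableSingletonClass Λ]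
    (ν : Measure (ℕ → Λ)) [IsProbabilityMeasure ν]
    (hν : IsQuasiBernoulli ν) :
    ∃ ν' : Measure (ℕ → Λ), IsProbabilityMeasure ν' ∧
      Ergodic shift ν' ∧
      IsQuasiBernoulli ν' ∧
      ν ≪ ν' ∧ ν' ≪ ν ∧
      ∃ K : ℝ≥0∞, 1 ≤ K ∧ K < ⊤ ∧ ∀ w : List Λ,
        ν (cylinder w) ≤ K * ν' (cylinder w) ∧ ν' (cylinder w) ≤ K * ν (cylinder w) := by
  obtain ⟨C, hC1, hC, hQB⟩ := id hν
  have hlow (w v : List Λ) := (hQB w v).1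
  have hup (w v : List Λ) := (hQB w v).2
  obtain ⟨ν', hν', hinv, hle, hge⟩ := exists_measurePreserving_le_smul measurable_shift ν hC.ne
    (map_shift_iterate_le_smul hC.ne hup) (le_smul_map_shift_iterate hC.ne hlow)
  have hac : ν' ≪ ν := Measure.absolutelyContinuous_of_le_smul hle
  refine ⟨ν', hν', ⟨hinv, (preErgodic_shift hC.ne hlow).of_absolutelyContinuous hac⟩,
    hν.of_le_smul hC1 hC.ne hge hle, Measure.absolutelyContinuous_of_le_smul hge, hac,
    C, hC1, hC, fun w => ⟨Measure.le_iff'.1 hge _, Measure.le_iff'.1 hle _⟩⟩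

/-- Every quasi-Bernoulli Borel probability measure `ν` on `Σ = Λ^ℕ`
is equivalent to a shift-invariant ergodic quasi-Bernoulli probability measure `ν'`;
indeed the two measures of every cylinder are comparable up to a constant `K ≥ 1`. -/
theorem quasiBernoulli_equivalent_invariant_ergodic
    {Λ : Type*} [Fintype Λ] [Nonempty Λ] [MeasurableSpace Λ] [MeasurableSingletonClass Λ]
    (ν : Measure (ℕ → Λ)) [IsProbabilityMeasure ν]
    (hν : IsQuasiBernoulli ν) :
    ∃ ν' : Measure (ℕ → Λ), IsProbabilityMeasure ν' ∧
      Ergodic shift ν' ∧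
      IsQuasiBernoulli ν' ∧
      ν ≪ ν' ∧ ν' ≪ ν ∧
      ∃ K : ℝ≥0∞, 1 ≤ K ∧ K < ⊤ ∧ ∀ w : List Λ,
        ν (cylinder w) ≤ K * ν' (cylinder w) ∧ ν' (cylinder w) ≤ K * ν (cylinder w) :=
  quasiBernoulli_equivalent_invariant_ergodic_general ν hν
end

section
/- Let {φ_i}_{i∈Λ} be a self-similar IFS on ℝ^d with similarity ratios r_i ∈ (0,1) whose attractor F satisfies the strong separation condition, let p_i ∈ (0,1) with Σ p_i = 1, and let μ be the associated self-similar measure. Then dim_A(μ,x) = max_{i∈Λ} log p_i / log r_i = dim_A μ for μ-almost every x ∈ F. -/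
open MeasureTheory Metric Set
open scoped NNReal ENNReal

/-- The pointwise Assouad dimension of a measure `μ` at a point `x`. -/
noncomputable def pwAssouadDim {X : Type*} [PseudoMetricSpace X] [MeasurableSpace X]
    (μ : Measure X) (x : X) : ℝ≥0∞ :=
  sInf (ENNReal.ofReal '' {s : ℝ | 0 < s ∧ ∃ C : ℝ, 0 < C ∧ ∀ r R : ℝ, 0 < r → r < R →
    μ (closedBall x R) ≤ ENNReal.ofReal (C * (R / r) ^ s) * μ (closedBall x r)})

/-- The global Assouad dimension of a measure `μ` supported on the set `F`. -/
noncomputable def assouadDimOn {X : Type*} [PseudoMetricSpace X] [MeasurableSpace X]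
    (μ : Measure X) (F : Set X) : ℝ≥0∞ :=
  sInf (ENNReal.ofReal '' {s : ℝ | 0 < s ∧ ∃ C : ℝ, 0 < C ∧ ∀ x ∈ F, ∀ r R : ℝ, 0 < r → r < R →
    μ (closedBall x R) ≤ ENNReal.ofReal (C * (R / r) ^ s) * μ (closedBall x r)})

/-!
Under the strong separation condition the cylinders `φ_w(F)` are separated at their own scale, so a
ball `B(x, ρ)` centred in `F` is squeezed between cylinders of ratio comparable to `ρ`, whose
measure is `p_w`. With `s = max_i log p_i / log r_i` we have `p_i ≥ r_i ^ s` for every `i`, and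
rescaling a ball by the cylinder map of a word `u` with `r_u ≈ R` gives
`μ B(x, R) ≤ C (R / ρ) ^ s μ B(x, ρ)` uniformly on `F`, so `dim_A μ ≤ s`. If `i` attains the
maximum, then `p_i = r_i ^ s`, and at a point whose coding contains the run `iᵐ` after a word `w`,
the balls of radii `≈ r_w` and `≈ r_w r_i ^ m` have measures `≈ p_w` and `≈ p_w p_i ^ m`; letting
`m → ∞` forces `dim_A(μ, x) ≥ s`. Almost every point has arbitrarily long runs of `i`: the points
of `F` whose coding avoids `iⁿ` are pulled back into themselves by every cylinder map, and outside
`F` by that of `iⁿ`, so by self-similarity they form a null set.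
-/

open Filter Function Topology

section AssouadDim

variable {X : Type*} [PseudoMetricSpace X] [MeasurableSpace X] {μ : Measure X}

theorem pwAssouadDim_le_assouadDimOn {F : Set X} {x : X} (hx : x ∈ F) :
    pwAssouadDim μ x ≤ assouadDimOn μ F :=
  sInf_le_sInf <| image_mono fun _ ⟨hs, C, hC, h⟩ => ⟨hs, C, hC, h x hx⟩

theorem assouadDimOn_le_of_measure_closedBall_le {F : Set X} {s C : ℝ} (hs : 0 < s) (hC : 0 < C)
    (h : ∀ x ∈ F, ∀ r R : ℝ, 0 < r → r < R →
      μ (closedBall x R) ≤ ENNReal.ofReal (C * (R / r) ^ s) * μ (closedBall x r)) :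
    assouadDimOn μ F ≤ ENNReal.ofReal s :=
  sInf_le ⟨s, ⟨hs, C, hC, h⟩, rfl⟩

theorem ofReal_le_pwAssouadDim_of_measure_closedBall_ge [IsFiniteMeasure μ] {x : X} {t K : ℝ}
    (hK : 0 < K) (h : ∀ M : ℝ, ∃ r R : ℝ, 0 < r ∧ r < R ∧ M ≤ R / r ∧ μ (closedBall x r) ≠ 0 ∧
      ENNReal.ofReal (K * (R / r) ^ t) * μ (closedBall x r) ≤ μ (closedBall x R)) :
    ENNReal.ofReal t ≤ pwAssouadDim μ x := by
  refine le_sInf ?_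
  rintro _ ⟨s, ⟨-, C, hC0, hC⟩, rfl⟩
  refine ENNReal.ofReal_le_ofReal (not_lt.1 fun hst => ?_)
  obtain ⟨M, hM⟩ := eventually_atTop.1
    ((tendsto_rpow_atTop (sub_pos.2 hst)).eventually_gt_atTop (C / K))
  obtain ⟨r, R, hr, hrR, hMR, hμr, hμ⟩ := h M
  have hRr : 0 < R / r := div_pos (hr.trans hrR) hr
  have hle : K * (R / r) ^ t ≤ C * (R / r) ^ s := by
    have := (ENNReal.mul_le_mul_iff_left hμr (measure_ne_top _ _)).1 (hμ.trans (hC r R hr hrR))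
    exact (ENNReal.ofReal_le_ofReal_iff (by positivity)).1 this
  have hlt : C < K * (R / r) ^ (t - s) := (div_lt_iff₀' hK).1 (hM _ hMR)
  rw [Real.rpow_sub hRr, mul_div_assoc', lt_div_iff₀ (by positivity)] at hlt
  exact hle.not_gt hlt

end AssouadDim

theorem eventually_le_dist_of_pairwise_disjoint {X ι : Type*} [MetricSpace X] [Finite ι]
    {K : ι → Set X} (hK : ∀ i, IsCompact (K i)) (hd : Pairwise (Disjoint on K)) :
    ∀ᶠ δ in 𝓝[>] (0 : ℝ), ∀ i j, i ≠ j → ∀ x ∈ K i, ∀ y ∈ K j, δ ≤ dist x y := by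
  refine eventually_all.2 fun i => eventually_all.2 fun j => ?_
  by_cases hij : i = j
  · exact .of_forall fun _ h => absurd hij h
  obtain ⟨ε, hε, h⟩ := exists_pos_forall_lt_edist (hK i) (hK j).isClosed (hd hij)
  filter_upwards [nhdsWithin_le_nhds (Iio_mem_nhds (NNReal.coe_pos.2 hε))] with δ hδ _ x hx y hy
  have := h x hx y hy
  rw [edist_nndist, ENNReal.coe_lt_coe, ← NNReal.coe_lt_coe, coe_nndist] at this
  exact (mem_Iio.1 hδ).le.trans this.le

section Words

variable {X Λ : Type*}

/-- `wordMap φ [i₁, …, iₙ] = φ i₁ ∘ ⋯ ∘ φ iₙ`, so `wordMap φ w '' F` is the cylinder `F_w`. -/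
def wordMap (φ : Λ → X → X) : List Λ → X → X
  | [] => id
  | i :: w => φ i ∘ wordMap φ w

@[simp] theorem wordMap_nil (φ : Λ → X → X) : wordMap φ [] = id := rfl

@[simp] theorem wordMap_cons (φ : Λ → X → X) (i : Λ) (w : List Λ) :
    wordMap φ (i :: w) = φ i ∘ wordMap φ w := rfl

theorem wordMap_append (φ : Λ → X → X) (u v : List Λ) :
    wordMap φ (u ++ v) = wordMap φ u ∘ wordMap φ v := by
  induction u with
  | nil => rfl
  | cons i u ih => simp [ih, comp_assoc]

theorem mapsTo_wordMap {φ : Λ → X → X} {F : Set X} (h : ∀ i, MapsTo (φ i) F F) (w : List Λ) :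
    MapsTo (wordMap φ w) F F := by
  induction w with
  | nil => exact mapsTo_id F
  | cons i w ih => exact (h i).comp ih

theorem continuous_wordMap [TopologicalSpace X] {φ : Λ → X → X} (h : ∀ i, Continuous (φ i))
    (w : List Λ) : Continuous (wordMap φ w) := by
  induction w with
  | nil => exact continuous_id
  | cons i w ih => exact (h i).comp ih

theorem dist_wordMap [PseudoMetricSpace X] {φ : Λ → X → X} {r : Λ → ℝ}
    (h : ∀ i x y, dist (φ i x) (φ i y) = r i * dist x y) (w : List Λ) (x y : X) :
    dist (wordMap φ w x) (wordMap φ w y) = (w.map r).prod * dist x y := by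
  induction w with
  | nil => simp
  | cons i w ih => simp [h, ih, mul_assoc]

end Words

theorem rpow_prod_map_le_prod_map {Λ : Type*} {r p : Λ → ℝ} {s : ℝ} (hr : ∀ i, 0 ≤ r i)
    (h : ∀ i, r i ^ s ≤ p i) (w : List Λ) : (w.map r).prod ^ s ≤ (w.map p).prod := by
  induction w with
  | nil => simp
  | cons i w ih =>
    simp only [List.map_cons, List.prod_cons]
    have hw : 0 ≤ (w.map r).prod := List.prod_nonneg fun a ha => by
      obtain ⟨j, -, rfl⟩ := List.mem_map.1 ha
      exact hr j
    rw [Real.mul_rpow (hr i) hw]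
    exact mul_le_mul (h i) ih (by positivity) ((Real.rpow_nonneg (hr i) s).trans (h i))

structure IsSelfSimilarSet {X Λ : Type*} [MetricSpace X] (φ : Λ → X → X) (r : Λ → ℝ)
    (F : Set X) : Prop where
  ratio_mem : ∀ i, r i ∈ Ioo (0 : ℝ) 1
  dist_eq : ∀ i x y, dist (φ i x) (φ i y) = r i * dist x y
  isCompact : IsCompact F
  nonempty : F.Nonempty
  eq_iUnion : F = ⋃ i, φ i '' F

namespace IsSelfSimilarSet

variable {X Λ : Type*} [MetricSpace X] {φ : Λ → X → X} {r : Λ → ℝ} {F : Set X}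

theorem ratio_pos (hF : IsSelfSimilarSet φ r F) (i : Λ) : 0 < r i := (hF.ratio_mem i).1

theorem ratio_lt_one (hF : IsSelfSimilarSet φ r F) (i : Λ) : r i < 1 := (hF.ratio_mem i).2

theorem mapsTo (hF : IsSelfSimilarSet φ r F) (i : Λ) : MapsTo (φ i) F F := by
  intro x hx
  rw [hF.eq_iUnion]
  exact mem_iUnion_of_mem i (mem_image_of_mem _ hx)

theorem exists_mem_image (hF : IsSelfSimilarSet φ r F) {y : X} (hy : y ∈ F) :
    ∃ i, y ∈ φ i '' F :=
  mem_iUnion.1 (hF.eq_iUnion ▸ hy)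

theorem nonempty_index (hF : IsSelfSimilarSet φ r F) : Nonempty Λ :=
  let ⟨_, hy⟩ := hF.nonempty
  let ⟨i, _⟩ := hF.exists_mem_image hy
  ⟨i⟩

theorem lipschitzWith (hF : IsSelfSimilarSet φ r F) (i : Λ) :
    LipschitzWith (r i).toNNReal (φ i) :=
  .of_dist_le_mul fun x y => by rw [Real.coe_toNNReal _ (hF.ratio_pos i).le, hF.dist_eq]

theorem continuous (hF : IsSelfSimilarSet φ r F) (i : Λ) : Continuous (φ i) :=
  (hF.lipschitzWith i).continuous

theorem injective (hF : IsSelfSimilarSet φ r F) (i : Λ) : Injective (φ i) := fun x y hxy => by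
  simpa [hxy, (hF.ratio_pos i).ne'] using hF.dist_eq i x y

theorem prod_map_ratio_pos (hF : IsSelfSimilarSet φ r F) (w : List Λ) : 0 < (w.map r).prod :=
  List.prod_pos fun _ ha => by
    obtain ⟨i, -, rfl⟩ := List.mem_map.1 ha
    exact hF.ratio_pos i

theorem prod_map_ratio_le_one (hF : IsSelfSimilarSet φ r F) (w : List Λ) :
    (w.map r).prod ≤ 1 :=
  (List.prod_map_le_prod_map₀ r (fun _ => 1) (fun i _ => (hF.ratio_pos i).le)
    fun i _ => (hF.ratio_lt_one i).le).trans_eq (by simp)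

theorem isCompact_wordMap_image (hF : IsSelfSimilarSet φ r F) (w : List Λ) :
    IsCompact (wordMap φ w '' F) :=
  hF.isCompact.image (continuous_wordMap hF.continuous w)

theorem infDist_apply_le (hF : IsSelfSimilarSet φ r F) (i : Λ) (x : X) :
    infDist (φ i x) F ≤ r i * infDist x F := by
  obtain ⟨y, hy, hxy⟩ := hF.isCompact.exists_infDist_eq_dist hF.nonempty x
  rw [hxy, ← hF.dist_eq]
  exact infDist_le_dist_of_mem (hF.mapsTo i hy)

theorem exists_word_ratio_mem_Icc [Finite Λ] (hF : IsSelfSimilarSet φ r F) {ρ₀ : ℝ}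
    (hρ₀ : ∀ i, ρ₀ ≤ r i) {y : X} (hy : y ∈ F) {t : ℝ} (ht : 0 < t) (ht1 : t ≤ 1) :
    ∃ w, y ∈ wordMap φ w '' F ∧ (w.map r).prod ∈ Icc (ρ₀ * t) t := by
  have := hF.nonempty_index
  obtain ⟨j, hj⟩ := Finite.exists_max r
  obtain ⟨n, hn⟩ := exists_pow_lt_of_lt_one ht (hF.ratio_lt_one j)
  induction n generalizing y t with
  | zero => exact absurd ht1 (by simpa using hn)
  | succ n ih =>
    obtain ⟨i, z, hz, rfl⟩ := hF.exists_mem_image hy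
    have hri := hF.ratio_pos i
    by_cases hit : r i ≤ t
    · exact ⟨[i], ⟨z, hz, rfl⟩, by simp; nlinarith [hρ₀ i], by simpa using hit⟩
    rw [not_le] at hit
    have hn' : r j ^ n < t / r i := by
      rw [lt_div_iff₀ hri]
      calc r j ^ n * r i ≤ r j ^ n * r j :=
            mul_le_mul_of_nonneg_left (hj i) (pow_pos (hF.ratio_pos j) n).le
        _ = r j ^ (n + 1) := (pow_succ _ _).symm
        _ < t := hn
    obtain ⟨w, hw, h1, h2⟩ := ih hz (div_pos ht hri) ((div_le_one hri).2 hit.le) hn'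
    refine ⟨i :: w, ?_, ?_, ?_⟩
    · rw [wordMap_cons, image_comp]
      exact mem_image_of_mem _ hw
    · rw [List.map_cons, List.prod_cons]
      calc ρ₀ * t = r i * (ρ₀ * (t / r i)) := by field_simp
        _ ≤ r i * (w.map r).prod := by gcongr
    · rw [List.map_cons, List.prod_cons, ← le_div_iff₀' hri]
      exact h2

theorem closedBall_inter_subset_wordMap_image (hF : IsSelfSimilarSet φ r F) {δ : ℝ}
    (hδ : ∀ i j, i ≠ j → ∀ x ∈ φ i '' F, ∀ y ∈ φ j '' F, δ ≤ dist x y) {w : List Λ} {x : X}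
    (hx : x ∈ wordMap φ w '' F) {ρ : ℝ} (hρ : ρ < δ * (w.map r).prod) :
    closedBall x ρ ∩ F ⊆ wordMap φ w '' F := by
  induction w generalizing x ρ with
  | nil => exact fun y hy => by simpa using hy.2
  | cons i w ih =>
    rw [wordMap_cons, image_comp] at hx ⊢
    obtain ⟨x, hxw, rfl⟩ := hx
    rintro _ ⟨hyx, hyF⟩
    obtain ⟨j, z, hz, rfl⟩ := hF.exists_mem_image hyF
    have hri := hF.ratio_pos i
    have hP := hF.prod_map_ratio_pos w
    have hP1 := hF.prod_map_ratio_le_one w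
    have hri1 := hF.ratio_lt_one i
    rw [mem_closedBall, dist_comm] at hyx
    rw [List.map_cons, List.prod_cons] at hρ
    -- otherwise `y` would lie in another first-level piece, at distance `≥ δ > ρ` from `x`
    obtain rfl : i = j := by
      by_contra hji
      have := hδ i j hji _ (mem_image_of_mem _ ((mapsTo_wordMap hF.mapsTo w).image_subset hxw))
        _ (mem_image_of_mem _ hz)
      have hq : r i * (w.map r).prod < 1 := by nlinarith
      rcases le_or_gt δ 0 with hδ0 | hδ0
      · nlinarith [dist_nonneg (x := φ i x) (y := φ j z), mul_pos hri hP]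
      · nlinarith
    refine mem_image_of_mem _ (ih hxw (ρ := ρ / r i) ?_ ⟨?_, hz⟩)
    · rw [div_lt_iff₀ hri]; linarith
    · rw [mem_closedBall, dist_comm, le_div_iff₀' hri, ← hF.dist_eq]; exact hyx

end IsSelfSimilarSet

section SelfSimilarMeasure

variable {X Λ : Type*} [MeasurableSpace X] [Fintype Λ] {φ : Λ → X → X} {p : Λ → ℝ}
  {μ : Measure X}

theorem measure_eq_sum_preimage (hφ : ∀ i, Measurable (φ i))
    (hμ : μ = ∑ i, ENNReal.ofReal (p i) • μ.map (φ i)) {A : Set X} (hA : MeasurableSet A) :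
    μ A = ∑ i, ENNReal.ofReal (p i) * μ (φ i ⁻¹' A) := by
  conv_lhs => rw [hμ]
  simp [Measure.map_apply (hφ _) hA]

theorem measure_eq_sum_wordMap_preimage (hφ : ∀ i, Measurable (φ i))
    (hμ : μ = ∑ i, ENNReal.ofReal (p i) • μ.map (φ i)) (n : ℕ) {A : Set X}
    (hA : MeasurableSet A) :
    μ A = ∑ v : Fin n → Λ,
      (∏ k, ENNReal.ofReal (p (v k))) * μ (wordMap φ (List.ofFn v) ⁻¹' A) := by
  induction n generalizing A with
  | zero => simp
  | succ n ih =>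
    rw [measure_eq_sum_preimage hφ hμ hA, ← (Fin.consEquiv fun _ => Λ).sum_comp,
      Fintype.sum_prod_type]
    refine Finset.sum_congr rfl fun i _ => ?_
    rw [ih (hφ i hA), Finset.mul_sum]
    refine Finset.sum_congr rfl fun v _ => ?_
    simp [Fin.prod_univ_succ, List.ofFn_succ, preimage_comp, mul_assoc]

/-- Iterating the self-similarity `|c|` times, `μ E ≤ (1 - p_c) μ E`. -/
theorem measure_eq_zero_of_preimage_subset [IsFiniteMeasure μ] (hφ : ∀ i, Measurable (φ i))
    (hμ : μ = ∑ i, ENNReal.ofReal (p i) • μ.map (φ i)) (hp : ∀ i, 0 < p i)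
    (hpsum : ∑ i, ENNReal.ofReal (p i) = 1) {E N : Set X} (hE : MeasurableSet E) (hN : μ N = 0)
    (hpre : ∀ v : List Λ, wordMap φ v ⁻¹' E ⊆ E ∪ N) (c : List Λ)
    (hc : wordMap φ c ⁻¹' E ⊆ N) : μ E = 0 := by
  classical
  set a : (Fin c.length → Λ) → ℝ≥0∞ := fun v => ∏ k, ENNReal.ofReal (p (v k))
  have hlt : ∑ v ∈ Finset.univ.erase c.get, a v < 1 := by
    have hsum : ∑ v, a v = 1 := by
      simpa [hpsum] using (Fintype.sum_pow (fun j => ENNReal.ofReal (p j)) c.length).symm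
    rw [← hsum, ← Finset.add_sum_erase _ _ (Finset.mem_univ c.get), add_comm]
    refine ENNReal.lt_add_right (ne_top_of_le_ne_top ENNReal.one_ne_top ?_) ?_
    · exact hsum ▸ Finset.sum_le_sum_of_subset (Finset.erase_subset _ _)
    · simp [a, Finset.prod_eq_zero_iff, hp]
  have hle : μ E ≤ (∑ v ∈ Finset.univ.erase c.get, a v) * μ E :=
    calc μ E = ∑ v, a v * μ (wordMap φ (List.ofFn v) ⁻¹' E) :=
          measure_eq_sum_wordMap_preimage hφ hμ c.length hE
      _ = ∑ v ∈ Finset.univ.erase c.get, a v * μ (wordMap φ (List.ofFn v) ⁻¹' E) := by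
          rw [← Finset.add_sum_erase _ _ (Finset.mem_univ c.get), List.ofFn_get,
            measure_mono_null hc hN, mul_zero, zero_add]
      _ ≤ ∑ v ∈ Finset.univ.erase c.get, a v * μ E := by
          refine Finset.sum_le_sum fun v _ => mul_le_mul_of_nonneg_left ((measure_mono
            (hpre _)).trans ((measure_union_le _ _).trans_eq (by rw [hN, add_zero]))) zero_le
      _ = (∑ v ∈ Finset.univ.erase c.get, a v) * μ E := (Finset.sum_mul _ _ _).symm
  by_contra h
  exact (hle.trans_lt (ENNReal.mul_lt_mul_left h (measure_ne_top _ _) hlt)).ne (one_mul _).symm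

end SelfSimilarMeasure

namespace IsSelfSimilarSet

variable {X Λ : Type*} [MetricSpace X] [MeasurableSpace X] [BorelSpace X] [Fintype Λ]
  {φ : Λ → X → X} {r p : Λ → ℝ} {F : Set X} {μ : Measure X}

theorem measure_le_infDist_le (hF : IsSelfSimilarSet φ r F)
    (hμ : μ = ∑ i, ENNReal.ofReal (p i) • μ.map (φ i)) (hp : ∑ i, ENNReal.ofReal (p i) = 1)
    {ρ : ℝ} (hρ : 0 < ρ) (hrρ : ∀ i, r i ≤ ρ) (t : ℝ) :
    μ {x | t ≤ infDist x F} ≤ μ {x | t / ρ ≤ infDist x F} := by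
  rw [measure_eq_sum_preimage (fun i => (hF.continuous i).measurable) hμ
    (measurableSet_le measurable_const (continuous_infDist_pt F).measurable)]
  calc ∑ i, ENNReal.ofReal (p i) * μ (φ i ⁻¹' {x | t ≤ infDist x F})
      ≤ ∑ i, ENNReal.ofReal (p i) * μ {x | t / ρ ≤ infDist x F} := by
        gcongr with i
        intro x (hx : t ≤ infDist (φ i x) F)
        show t / ρ ≤ infDist x F
        rw [div_le_iff₀' hρ]
        exact hx.trans ((hF.infDist_apply_le i x).trans
          (mul_le_mul_of_nonneg_right (hrρ i) infDist_nonneg))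
    _ = μ {x | t / ρ ≤ infDist x F} := by rw [← Finset.sum_mul, hp, one_mul]

theorem measure_compl_eq_zero [IsFiniteMeasure μ] (hF : IsSelfSimilarSet φ r F)
    (hμ : μ = ∑ i, ENNReal.ofReal (p i) • μ.map (φ i)) (hp : ∑ i, ENNReal.ofReal (p i) = 1) :
    μ Fᶜ = 0 := by
  have := hF.nonempty_index
  obtain ⟨j, hj⟩ := Finite.exists_max r
  have hρ := hF.ratio_pos j
  set S : ℝ → Set X := fun t => {x | t ≤ infDist x F}
  have hzero : ∀ t > 0, μ (S t) = 0 := by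
    intro t ht
    have hlim : Tendsto (fun k : ℕ => μ (S (t / r j ^ k))) atTop (𝓝 0) := by
      have h1 := tendsto_measure_iInter_atTop (μ := μ) (s := S)
        (fun u => (measurableSet_le measurable_const
          (continuous_infDist_pt F).measurable).nullMeasurableSet)
        (fun u v huv x hx => huv.trans hx) ⟨0, measure_ne_top μ (S 0)⟩
      rw [eq_empty_of_forall_notMem fun x hx =>
        (lt_add_one (infDist x F)).not_ge (mem_iInter.1 hx _), measure_empty] at h1
      have h2 : Tendsto (fun k : ℕ => t * (r j)⁻¹ ^ k) atTop atTop :=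
        (tendsto_pow_atTop_atTop_of_one_lt
          ((one_lt_inv₀ hρ).2 (hF.ratio_lt_one j))).const_mul_atTop ht
      exact (h1.comp h2).congr fun k => by rw [div_eq_mul_inv, ← inv_pow]; rfl
    refine le_zero_iff.1 (ge_of_tendsto' hlim fun k => ?_)
    induction k with
    | zero => simp
    | succ k ih => exact ih.trans ((hF.measure_le_infDist_le hμ hp hρ hj _).trans_eq
        (by rw [pow_succ, div_div]))
  refine measure_mono_null (fun x hx => mem_iUnion.2 ?_) (measure_iUnion_null fun n : ℕ =>
    hzero (1 / ((n : ℝ) + 1)) Nat.one_div_pos_of_nat)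
  obtain ⟨n, hn⟩ := exists_nat_one_div_lt
    ((hF.isCompact.isClosed.notMem_iff_infDist_pos hF.nonempty).1 hx)
  exact ⟨n, hn.le⟩

theorem measure_image (hF : IsSelfSimilarSet φ r F)
    (hSSC : Pairwise (Disjoint on fun i => φ i '' F))
    (hμ : μ = ∑ i, ENNReal.ofReal (p i) • μ.map (φ i)) (hμF : μ Fᶜ = 0) (i : Λ) {S : Set X}
    (hS : IsCompact S) (hSF : S ⊆ F) : μ (φ i '' S) = ENNReal.ofReal (p i) * μ S := by
  classical
  rw [measure_eq_sum_preimage (fun j => (hF.continuous j).measurable) hμ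
    (hS.image (hF.continuous i)).isClosed.measurableSet, Finset.sum_eq_single i,
    (hF.injective i).preimage_image]
  · intro j _ hji
    rw [measure_mono_null (s := φ j ⁻¹' (φ i '' S)) (fun x hx (hxF : x ∈ F) =>
      (hSSC hji).ne_of_mem (mem_image_of_mem _ hxF) (image_mono hSF hx) rfl) hμF, mul_zero]
  · simp

theorem measure_wordMap_image (hF : IsSelfSimilarSet φ r F)
    (hSSC : Pairwise (Disjoint on fun i => φ i '' F))
    (hμ : μ = ∑ i, ENNReal.ofReal (p i) • μ.map (φ i)) (hp : ∀ i, 0 ≤ p i) (hμF : μ Fᶜ = 0)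
    (w : List Λ) {S : Set X} (hS : IsCompact S) (hSF : S ⊆ F) :
    μ (wordMap φ w '' S) = ENNReal.ofReal (w.map p).prod * μ S := by
  induction w with
  | nil => simp
  | cons i w ih =>
    rw [wordMap_cons, image_comp, hF.measure_image hSSC hμ hμF i
      (hS.image (continuous_wordMap hF.continuous w))
      ((image_mono hSF).trans (mapsTo_wordMap hF.mapsTo w).image_subset), ih, List.map_cons,
      List.prod_cons, ENNReal.ofReal_mul (hp i), mul_assoc]

theorem measure_closedBall_le [IsProbabilityMeasure μ] (hF : IsSelfSimilarSet φ r F)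
    (hSSC : Pairwise (Disjoint on fun i => φ i '' F))
    (hμ : μ = ∑ i, ENNReal.ofReal (p i) • μ.map (φ i)) (hp : ∀ i, 0 ≤ p i) (hμF : μ Fᶜ = 0)
    {δ : ℝ} (hδ : ∀ i j, i ≠ j → ∀ x ∈ φ i '' F, ∀ y ∈ φ j '' F, δ ≤ dist x y) {w : List Λ}
    {x : X} (hx : x ∈ wordMap φ w '' F) {ρ : ℝ} (hρ : ρ < δ * (w.map r).prod) :
    μ (closedBall x ρ) ≤ ENNReal.ofReal (w.map p).prod :=
  calc μ (closedBall x ρ) = μ (closedBall x ρ ∩ F) := (measure_inter_conull hμF).symm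
    _ ≤ μ (wordMap φ w '' F) := measure_mono (hF.closedBall_inter_subset_wordMap_image hδ hx hρ)
    _ = ENNReal.ofReal (w.map p).prod * μ F :=
      hF.measure_wordMap_image hSSC hμ hp hμF w hF.isCompact subset_rfl
    _ ≤ ENNReal.ofReal (w.map p).prod := mul_le_of_le_one_right' prob_le_one

theorem ofReal_mul_measure_closedBall_le (hF : IsSelfSimilarSet φ r F)
    (hSSC : Pairwise (Disjoint on fun i => φ i '' F))
    (hμ : μ = ∑ i, ENNReal.ofReal (p i) • μ.map (φ i)) (hp : ∀ i, 0 ≤ p i) (hμF : μ Fᶜ = 0)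
    (w : List Λ) {y : X} (ρ : ℝ) :
    ENNReal.ofReal (w.map p).prod * μ (closedBall y ρ) ≤
      μ (closedBall (wordMap φ w y) ((w.map r).prod * ρ)) := by
  rw [← measure_inter_conull hμF, ← hF.measure_wordMap_image hSSC hμ hp hμF w
    (hF.isCompact.inter_left isClosed_closedBall) inter_subset_right]
  refine measure_mono ?_
  rintro _ ⟨z, ⟨hz, -⟩, rfl⟩
  rw [mem_closedBall, dist_wordMap hF.dist_eq]
  exact mul_le_mul_of_nonneg_left (mem_closedBall.1 hz) (hF.prod_map_ratio_pos w).le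

theorem ofReal_le_measure_closedBall [IsProbabilityMeasure μ] (hF : IsSelfSimilarSet φ r F)
    (hSSC : Pairwise (Disjoint on fun i => φ i '' F))
    (hμ : μ = ∑ i, ENNReal.ofReal (p i) • μ.map (φ i)) (hp : ∀ i, 0 ≤ p i) (hμF : μ Fᶜ = 0)
    {w : List Λ} {x : X} (hx : x ∈ wordMap φ w '' F) {ρ : ℝ}
    (hρ : diam F * (w.map r).prod ≤ ρ) :
    ENNReal.ofReal (w.map p).prod ≤ μ (closedBall x ρ) := by
  obtain ⟨y, hy, rfl⟩ := hx
  have hfull : μ (closedBall y (diam F)) = 1 := by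
    refine le_antisymm prob_le_one ?_
    rw [← (prob_compl_eq_zero_iff hF.isCompact.isClosed.measurableSet).1 hμF]
    exact measure_mono fun z hz =>
      mem_closedBall.2 (dist_le_diam_of_mem hF.isCompact.isBounded hz hy)
  calc ENNReal.ofReal (w.map p).prod
      = ENNReal.ofReal (w.map p).prod * μ (closedBall y (diam F)) := by rw [hfull, mul_one]
    _ ≤ μ (closedBall (wordMap φ w y) ((w.map r).prod * diam F)) :=
      hF.ofReal_mul_measure_closedBall_le hSSC hμ hp hμF w _
    _ ≤ μ (closedBall (wordMap φ w y) ρ) :=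
      measure_mono (closedBall_subset_closedBall (by linarith [mul_comm (diam F) (w.map r).prod]))

theorem measure_closedBall_pos [IsProbabilityMeasure μ] (hF : IsSelfSimilarSet φ r F)
    (hSSC : Pairwise (Disjoint on fun i => φ i '' F))
    (hμ : μ = ∑ i, ENNReal.ofReal (p i) • μ.map (φ i)) (hp : ∀ i, 0 < p i) (hμF : μ Fᶜ = 0)
    {x : X} (hx : x ∈ F) {ρ : ℝ} (hρ : 0 < ρ) : 0 < μ (closedBall x ρ) := by
  have := hF.nonempty_index
  obtain ⟨j, hj⟩ := Finite.exists_min r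
  obtain ⟨w, hw, -, hwρ⟩ := hF.exists_word_ratio_mem_Icc hj hx
    (lt_min (by positivity) one_pos : 0 < min (ρ / (diam F + 1)) 1) (min_le_right _ _)
  refine lt_of_lt_of_le ?_
    (hF.ofReal_le_measure_closedBall hSSC hμ (fun i => (hp i).le) hμF hw ?_)
  · exact ENNReal.ofReal_pos.2 (List.prod_pos fun _ ha => by
      obtain ⟨i, -, rfl⟩ := List.mem_map.1 ha
      exact hp i)
  · have hD : 0 < diam F + 1 := by positivity
    calc diam F * (w.map r).prod ≤ (diam F + 1) * (ρ / (diam F + 1)) := by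
          gcongr
          · exact (hF.prod_map_ratio_pos w).le
          · linarith
          · exact hwρ.trans (min_le_left _ _)
      _ = ρ := mul_div_cancel₀ ρ hD.ne'

theorem ofReal_rpow_le_measure_closedBall [IsProbabilityMeasure μ] (hF : IsSelfSimilarSet φ r F)
    (hSSC : Pairwise (Disjoint on fun i => φ i '' F))
    (hμ : μ = ∑ i, ENNReal.ofReal (p i) • μ.map (φ i)) (hμF : μ Fᶜ = 0) {s ρ₀ : ℝ}
    (hs : 0 ≤ s) (hrs : ∀ i, r i ^ s ≤ p i) (hρ₀ : ∀ i, ρ₀ ≤ r i) (hρ₀0 : 0 ≤ ρ₀) {D : ℝ}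
    (hD : diam F ≤ D) {y : X} (hy : y ∈ F) {t : ℝ} (ht : 0 < t) (ht1 : t ≤ 1) :
    ENNReal.ofReal ((ρ₀ * t) ^ s) ≤ μ (closedBall y (D * t)) := by
  have hp : ∀ i, 0 ≤ p i := fun i => (Real.rpow_nonneg (hF.ratio_pos i).le s).trans (hrs i)
  obtain ⟨w, hw, h1, h2⟩ := hF.exists_word_ratio_mem_Icc hρ₀ hy ht ht1
  calc ENNReal.ofReal ((ρ₀ * t) ^ s) ≤ ENNReal.ofReal (w.map p).prod :=
        ENNReal.ofReal_le_ofReal ((Real.rpow_le_rpow (by positivity) h1 hs).trans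
          (rpow_prod_map_le_prod_map (fun i => (hF.ratio_pos i).le) hrs w))
    _ ≤ μ (closedBall y (D * t)) :=
        hF.ofReal_le_measure_closedBall hSSC hμ hp hμF hw
          (mul_le_mul hD h2 (hF.prod_map_ratio_pos w).le (diam_nonneg.trans hD))

theorem exists_wordMap_measure_closedBall_le [IsProbabilityMeasure μ]
    (hF : IsSelfSimilarSet φ r F) (hSSC : Pairwise (Disjoint on fun i => φ i '' F))
    (hμ : μ = ∑ i, ENNReal.ofReal (p i) • μ.map (φ i)) (hp : ∀ i, 0 ≤ p i) (hμF : μ Fᶜ = 0)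
    {δ : ℝ} (hδ : ∀ i j, i ≠ j → ∀ x ∈ φ i '' F, ∀ y ∈ φ j '' F, δ ≤ dist x y) {ρ₀ c : ℝ}
    (hρ₀ : ∀ i, ρ₀ ≤ r i) (hρ₀0 : 0 < ρ₀) (hc : 0 < c) (hcδ : c < δ) {x : X} (hx : x ∈ F)
    {R : ℝ} (hR : 0 < R) :
    ∃ u, x ∈ wordMap φ u '' F ∧ μ (closedBall x R) ≤ ENNReal.ofReal (u.map p).prod ∧
      c * ρ₀ * (u.map r).prod ≤ R := by
  by_cases hRc : c * ρ₀ ≤ R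
  · exact ⟨[], by simpa using hx, by simpa using prob_le_one, by simpa using hRc⟩
  rw [not_le] at hRc
  obtain ⟨u, hu, h1, h2⟩ := hF.exists_word_ratio_mem_Icc hρ₀ hx (div_pos hR (by positivity))
    ((div_le_one (by positivity)).2 hRc.le)
  have hP := hF.prod_map_ratio_pos u
  have hRu : R ≤ c * (u.map r).prod := by
    rw [mul_div_assoc', mul_comm c, ← div_div, mul_div_cancel_left₀ _ hρ₀0.ne',
      div_le_iff₀' hc] at h1
    exact h1
  refine ⟨u, hu, hF.measure_closedBall_le hSSC hμ hp hμF hδ hu ?_, ?_⟩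
  · exact hRu.trans_lt (mul_lt_mul_of_pos_right hcδ hP)
  · calc c * ρ₀ * (u.map r).prod ≤ c * ρ₀ * (R / (c * ρ₀)) := by gcongr
      _ = R := mul_div_cancel₀ R (by positivity)

theorem measure_closedBall_le_rpow_mul [IsProbabilityMeasure μ] (hF : IsSelfSimilarSet φ r F)
    (hSSC : Pairwise (Disjoint on fun i => φ i '' F))
    (hμ : μ = ∑ i, ENNReal.ofReal (p i) • μ.map (φ i)) (hμF : μ Fᶜ = 0) {s : ℝ} (hs : 0 ≤ s)
    (hrs : ∀ i, r i ^ s ≤ p i) {δ : ℝ}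
    (hδ : ∀ i j, i ≠ j → ∀ x ∈ φ i '' F, ∀ y ∈ φ j '' F, δ ≤ dist x y) {ρ₀ c D : ℝ}
    (hρ₀ : ∀ i, ρ₀ ≤ r i) (hρ₀0 : 0 < ρ₀) (hc : 0 < c) (hcδ : c < δ) (hD : diam F ≤ D)
    (hcD : c * ρ₀ ≤ D) {x : X} (hx : x ∈ F) {ρ R : ℝ} (hρ : 0 < ρ) (hρR : ρ < R) :
    μ (closedBall x R) ≤
      ENNReal.ofReal ((D / (c * ρ₀ ^ 2)) ^ s * (R / ρ) ^ s) * μ (closedBall x ρ) := by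
  have hp : ∀ i, 0 ≤ p i := fun i => (Real.rpow_nonneg (hF.ratio_pos i).le s).trans (hrs i)
  have hR : 0 < R := hρ.trans hρR
  have hD0 : 0 < D := (by positivity : 0 < c * ρ₀).trans_le hcD
  obtain ⟨u, ⟨y, hy, rfl⟩, hμR, huR⟩ :=
    hF.exists_wordMap_measure_closedBall_le hSSC hμ hp hμF hδ hρ₀ hρ₀0 hc hcδ hx hR
  have hP := hF.prod_map_ratio_pos u
  set τ := c * ρ₀ * ρ / (D * R) with hτ
  have hτ1 : τ ≤ 1 := by
    rw [hτ, div_le_one (by positivity)]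
    exact mul_le_mul hcD hρR.le hρ.le hD0.le
  have hlow := hF.ofReal_rpow_le_measure_closedBall hSSC hμ hμF hs hrs hρ₀ hρ₀0.le hD hy
    (by positivity : 0 < τ) hτ1
  -- rescaling the ball of radius `ρ` by the cylinder map of `u` leaves a ball of radius `≥ D τ`
  have hDτ : D * τ ≤ ρ / (u.map r).prod := by
    rw [hτ, mul_div_assoc', div_le_div_iff₀ (by positivity) hP]
    have := mul_le_mul_of_nonneg_left huR (by positivity : 0 ≤ ρ * D)
    nlinarith
  have hone : (D / (c * ρ₀ ^ 2)) ^ s * (R / ρ) ^ s * (ρ₀ * τ) ^ s = 1 := by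
    rw [← Real.mul_rpow (by positivity) (by positivity), ← Real.mul_rpow (by positivity)
      (by positivity)]
    convert Real.one_rpow s using 2
    rw [hτ]
    field_simp
  calc μ (closedBall (wordMap φ u y) R) ≤ ENNReal.ofReal (u.map p).prod := hμR
    _ = ENNReal.ofReal ((D / (c * ρ₀ ^ 2)) ^ s * (R / ρ) ^ s) *
          (ENNReal.ofReal (u.map p).prod * ENNReal.ofReal ((ρ₀ * τ) ^ s)) := by
      rw [mul_left_comm, ← ENNReal.ofReal_mul (by positivity), hone, ENNReal.ofReal_one,
        mul_one]
    _ ≤ ENNReal.ofReal ((D / (c * ρ₀ ^ 2)) ^ s * (R / ρ) ^ s) *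
          (ENNReal.ofReal (u.map p).prod * μ (closedBall y (ρ / (u.map r).prod))) := by
      gcongr
      exact hlow.trans (measure_mono (closedBall_subset_closedBall hDτ))
    _ ≤ ENNReal.ofReal ((D / (c * ρ₀ ^ 2)) ^ s * (R / ρ) ^ s) *
          μ (closedBall (wordMap φ u y) ρ) := by
      gcongr
      simpa [mul_div_cancel₀ _ hP.ne'] using
        hF.ofReal_mul_measure_closedBall_le hSSC hμ hp hμF u (ρ / (u.map r).prod)

theorem assouadDimOn_le_ofReal [IsProbabilityMeasure μ] (hF : IsSelfSimilarSet φ r F)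
    (hSSC : Pairwise (Disjoint on fun i => φ i '' F))
    (hμ : μ = ∑ i, ENNReal.ofReal (p i) • μ.map (φ i)) (hμF : μ Fᶜ = 0) {s : ℝ} (hs : 0 < s)
    (hrs : ∀ i, r i ^ s ≤ p i) : assouadDimOn μ F ≤ ENNReal.ofReal s := by
  have := hF.nonempty_index
  obtain ⟨i₀, hi₀⟩ := Finite.exists_min r
  obtain ⟨δ, hsep, hδ0, hδ1⟩ := ((eventually_le_dist_of_pairwise_disjoint
    (fun i => hF.isCompact.image (hF.continuous i)) hSSC).and (Ioo_mem_nhdsGT one_pos)).exists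
  have hρ₀ := hF.ratio_pos i₀
  have hcD : δ / 2 * r i₀ ≤ diam F + 1 := by
    nlinarith [hF.ratio_lt_one i₀, diam_nonneg (s := F)]
  exact assouadDimOn_le_of_measure_closedBall_le hs (by positivity) fun x hx ρ R hρ hρR =>
    hF.measure_closedBall_le_rpow_mul hSSC hμ hμF hs.le hrs hsep hi₀ hρ₀ (half_pos hδ0)
      (half_lt_self hδ0) (le_add_of_nonneg_right zero_le_one) hcD hx hρ hρR

theorem ae_exists_mem_wordMap_append_replicate [IsFiniteMeasure μ]
    (hF : IsSelfSimilarSet φ r F) (hμ : μ = ∑ i, ENNReal.ofReal (p i) • μ.map (φ i))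
    (hp : ∀ i, 0 < p i) (hpsum : ∑ i, ENNReal.ofReal (p i) = 1) (hμF : μ Fᶜ = 0) (i : Λ) :
    ∀ᵐ x ∂μ, ∀ n, ∃ w, x ∈ wordMap φ (w ++ List.replicate n i) '' F := by
  refine ae_all_iff.2 fun n => ?_
  set G := ⋃ w : List Λ, wordMap φ (w ++ List.replicate n i) '' F
  have hE : MeasurableSet (F \ G) := hF.isCompact.isClosed.measurableSet.diff
    (.iUnion fun w => (hF.isCompact_wordMap_image _).isClosed.measurableSet)
  have hpre : ∀ v : List Λ, wordMap φ v ⁻¹' (F \ G) ⊆ (F \ G) ∪ Fᶜ := by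
    rintro v y ⟨-, hyG⟩
    by_cases hyF : y ∈ F
    · refine .inl ⟨hyF, fun hy => hyG ?_⟩
      obtain ⟨w, hw⟩ := mem_iUnion.1 hy
      refine mem_iUnion.2 ⟨v ++ w, ?_⟩
      rw [List.append_assoc, wordMap_append, image_comp]
      exact mem_image_of_mem _ hw
    · exact .inr hyF
  have hE0 : μ (F \ G) = 0 :=
    measure_eq_zero_of_preimage_subset (fun j => (hF.continuous j).measurable) hμ hp hpsum hE hμF
      hpre (List.replicate n i) fun y hy hyF => hy.2 (mem_iUnion.2 ⟨[], mem_image_of_mem _ hyF⟩)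
  rw [ae_iff]
  refine measure_mono_null (fun x hx => ?_) (measure_union_null hE0 hμF)
  by_cases hxF : x ∈ F
  · exact .inl ⟨hxF, fun hxG => hx (mem_iUnion.1 hxG)⟩
  · exact .inr hxF

theorem ofReal_rpow_mul_measure_closedBall_le [IsProbabilityMeasure μ]
    (hF : IsSelfSimilarSet φ r F) (hSSC : Pairwise (Disjoint on fun i => φ i '' F))
    (hμ : μ = ∑ i, ENNReal.ofReal (p i) • μ.map (φ i)) (hp : ∀ i, 0 ≤ p i) (hμF : μ Fᶜ = 0)
    {δ : ℝ} (hδ : ∀ i j, i ≠ j → ∀ x ∈ φ i '' F, ∀ y ∈ φ j '' F, δ ≤ dist x y) {c D : ℝ}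
    (hcδ : c < δ) (hD : diam F ≤ D) {i : Λ} {s : ℝ} (hi : p i = r i ^ s)
    {w : List Λ} {m : ℕ} {x : X} (hx : x ∈ wordMap φ (w ++ List.replicate m i) '' F) :
    ENNReal.ofReal ((r i ^ m)⁻¹ ^ s) * μ (closedBall x (c * (w.map r).prod * r i ^ m)) ≤
      μ (closedBall x (D * (w.map r).prod)) := by
  have hxw : x ∈ wordMap φ w '' F := by
    rw [wordMap_append, image_comp] at hx
    exact image_mono (mapsTo_wordMap hF.mapsTo _).image_subset hx
  have hP := hF.prod_map_ratio_pos w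
  have hrm : 0 < r i ^ m := pow_pos (hF.ratio_pos i) m
  have hr_run : ((w ++ List.replicate m i).map r).prod = (w.map r).prod * r i ^ m := by
    simp [List.prod_append, List.map_replicate, List.prod_replicate]
  have hp_run : ((w ++ List.replicate m i).map p).prod = (w.map p).prod * p i ^ m := by
    simp [List.prod_append, List.map_replicate, List.prod_replicate]
  have hsmall := hF.measure_closedBall_le hSSC hμ hp hμF hδ hx
    (ρ := c * (w.map r).prod * r i ^ m) (by rw [hr_run, ← mul_assoc]; gcongr)
  have hbig := hF.ofReal_le_measure_closedBall hSSC hμ hp hμF hxw (ρ := D * (w.map r).prod)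
    (by gcongr)
  have hone : (r i ^ m)⁻¹ ^ s * p i ^ m = 1 := by
    rw [hi, Real.rpow_pow_comm (hF.ratio_pos i).le, Real.inv_rpow hrm.le,
      inv_mul_cancel₀ (Real.rpow_pos_of_pos hrm s).ne']
  calc ENNReal.ofReal ((r i ^ m)⁻¹ ^ s) * μ (closedBall x (c * (w.map r).prod * r i ^ m))
      ≤ ENNReal.ofReal ((r i ^ m)⁻¹ ^ s) * ENNReal.ofReal ((w.map p).prod * p i ^ m) := by
        rw [← hp_run]; gcongr
    _ = ENNReal.ofReal (w.map p).prod := by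
      rw [← ENNReal.ofReal_mul (by positivity), mul_left_comm, hone, mul_one]
    _ ≤ μ (closedBall x (D * (w.map r).prod)) := hbig

theorem ofReal_le_pwAssouadDim [IsProbabilityMeasure μ] (hF : IsSelfSimilarSet φ r F)
    (hSSC : Pairwise (Disjoint on fun i => φ i '' F))
    (hμ : μ = ∑ i, ENNReal.ofReal (p i) • μ.map (φ i)) (hp : ∀ i, 0 < p i) (hμF : μ Fᶜ = 0)
    {i : Λ} {s : ℝ} (hi : p i = r i ^ s) {x : X} (hx : x ∈ F)
    (hrun : ∀ n, ∃ w, x ∈ wordMap φ (w ++ List.replicate n i) '' F) :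
    ENNReal.ofReal s ≤ pwAssouadDim μ x := by
  obtain ⟨δ, hsep, hδ0, hδ1⟩ := ((eventually_le_dist_of_pairwise_disjoint
    (fun i => hF.isCompact.image (hF.continuous i)) hSSC).and (Ioo_mem_nhdsGT one_pos)).exists
  set c := δ / 2
  have hc : 0 < c := half_pos hδ0
  set D := diam F + 1
  have hD : 1 ≤ D := le_add_of_nonneg_left diam_nonneg
  refine ofReal_le_pwAssouadDim_of_measure_closedBall_ge (K := (c / D) ^ s) (by positivity)
    fun M => ?_
  obtain ⟨m, hm⟩ := exists_pow_lt_of_lt_one (show 0 < D / (c * max M 1) by positivity)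
    (hF.ratio_lt_one i)
  obtain ⟨w, hw⟩ := hrun m
  have hP := hF.prod_map_ratio_pos w
  have hrm : 0 < r i ^ m := pow_pos (hF.ratio_pos i) m
  have hratio : D * (w.map r).prod / (c * (w.map r).prod * r i ^ m) = D / (c * r i ^ m) := by
    field_simp
  refine ⟨c * (w.map r).prod * r i ^ m, D * (w.map r).prod, by positivity, ?_, ?_,
    (hF.measure_closedBall_pos hSSC hμ hp hμF hx (by positivity)).ne', ?_⟩
  · have hrm1 : r i ^ m ≤ 1 := pow_le_one₀ (hF.ratio_pos i).le (hF.ratio_lt_one i).le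
    have : c * r i ^ m < D :=
      (mul_le_of_le_one_right hc.le hrm1).trans_lt ((half_lt_self hδ0).trans (hδ1.trans_le hD))
    nlinarith
  · rw [hratio, le_div_iff₀ (by positivity)]
    rw [lt_div_iff₀ (by positivity)] at hm
    nlinarith [mul_le_mul_of_nonneg_right (le_max_left M 1) (by positivity : 0 ≤ c * r i ^ m)]
  · convert hF.ofReal_rpow_mul_measure_closedBall_le hSSC hμ (fun j => (hp j).le) hμF hsep
      (half_lt_self hδ0) (le_add_of_nonneg_right zero_le_one) hi hw using 3
    rw [hratio, ← Real.mul_rpow (by positivity) (by positivity)]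
    field_simp

end IsSelfSimilarSet

theorem selfSimilar_SSC_pwAssouadDim_ae_general {d : ℕ} {Λ : Type*} [Fintype Λ]
    (φ : Λ → EuclideanSpace ℝ (Fin d) → EuclideanSpace ℝ (Fin d))
    (r : Λ → ℝ) (hr : ∀ i, r i ∈ Set.Ioo (0 : ℝ) 1)
    (hsim : ∀ i, ∀ x y, dist (φ i x) (φ i y) = r i * dist x y)
    (F : Set (EuclideanSpace ℝ (Fin d)))
    (hFc : IsCompact F) (hFne : F.Nonempty)
    (hFinv : F = ⋃ i, φ i '' F)
    (hSSC : ∀ i j : Λ, i ≠ j → Disjoint (φ i '' F) (φ j '' F))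
    (p : Λ → ℝ) (hp : ∀ i, p i ∈ Set.Ioo (0 : ℝ) 1) (hpsum : ∑ i : Λ, p i = 1)
    (μ : Measure (EuclideanSpace ℝ (Fin d))) [IsProbabilityMeasure μ]
    (hμ : μ = ∑ i : Λ, ENNReal.ofReal (p i) • μ.map (φ i)) :
    (∀ᵐ x ∂μ, pwAssouadDim μ x =
      ⨆ i : Λ, ENNReal.ofReal (Real.log (p i) / Real.log (r i))) ∧
    assouadDimOn μ F = ⨆ i : Λ, ENNReal.ofReal (Real.log (p i) / Real.log (r i)) := by
  have hF : IsSelfSimilarSet φ r F := ⟨hr, hsim, hFc, hFne, hFinv⟩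
  have hSSC' : Pairwise (Disjoint on fun i => φ i '' F) := fun i j hij => hSSC i j hij
  have hp0 : ∀ i, 0 < p i := fun i => (hp i).1
  have hpsum' : ∑ i, ENNReal.ofReal (p i) = 1 := by
    rw [← ENNReal.ofReal_sum_of_nonneg fun i _ => (hp0 i).le, hpsum, ENNReal.ofReal_one]
  have hμF := hF.measure_compl_eq_zero hμ hpsum'
  have := hF.nonempty_index
  obtain ⟨i, hi⟩ := Finite.exists_max fun j => Real.logb (r j) (p j)
  set s := Real.logb (r i) (p i)
  have hsup : ⨆ j, ENNReal.ofReal (Real.log (p j) / Real.log (r j)) = ENNReal.ofReal s :=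
    le_antisymm (iSup_le fun j => ENNReal.ofReal_le_ofReal (hi j)) (le_iSup_of_le i le_rfl)
  have hup := hF.assouadDimOn_le_ofReal hSSC' hμ hμF
    (Real.logb_pos_of_base_lt_one (hr i).1 (hr i).2 (hp i).1 (hp i).2) fun j =>
      (Real.logb_le_iff_le_rpow_of_base_lt_one (hr j).1 (hr j).2 (hp j).1).1 (hi j)
  have hdim : ∀ x ∈ F, (∀ n, ∃ w, x ∈ wordMap φ (w ++ List.replicate n i) '' F) →
      pwAssouadDim μ x = ENNReal.ofReal s := fun x hx hrun =>
    le_antisymm ((pwAssouadDim_le_assouadDimOn hx).trans hup) <| hF.ofReal_le_pwAssouadDim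
      hSSC' hμ hp0 hμF (Real.rpow_logb (hr i).1 (hr i).2.ne (hp i).1).symm hx hrun
  have hgood := Eventually.and (mem_ae_iff.2 hμF)
    (hF.ae_exists_mem_wordMap_append_replicate hμ hp0 hpsum' hμF i)
  obtain ⟨x₀, hx₀, hrun₀⟩ := hgood.exists
  rw [hsup]
  exact ⟨hgood.mono fun x hx => hdim x hx.1 hx.2,
    le_antisymm hup ((hdim x₀ hx₀ hrun₀).symm.le.trans (pwAssouadDim_le_assouadDimOn hx₀))⟩

/-- For a self-similar measure on a strongly separated self-similar set,
the pointwise Assouad dimension equals `max_i log p_i / log r_i`, which is the global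
Assouad dimension, at `μ`-almost every point. -/
theorem selfSimilar_SSC_pwAssouadDim_ae {d : ℕ} {Λ : Type*} [Fintype Λ] [Nonempty Λ]
    (φ : Λ → EuclideanSpace ℝ (Fin d) → EuclideanSpace ℝ (Fin d))
    (r : Λ → ℝ) (hr : ∀ i, r i ∈ Set.Ioo (0 : ℝ) 1)
    (hsim : ∀ i, ∀ x y, dist (φ i x) (φ i y) = r i * dist x y)
    (F : Set (EuclideanSpace ℝ (Fin d)))
    (hFc : IsCompact F) (hFne : F.Nonempty)
    (hFinv : F = ⋃ i, φ i '' F)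
    (hSSC : ∀ i j : Λ, i ≠ j → Disjoint (φ i '' F) (φ j '' F))
    (p : Λ → ℝ) (hp : ∀ i, p i ∈ Set.Ioo (0 : ℝ) 1) (hpsum : ∑ i : Λ, p i = 1)
    (μ : Measure (EuclideanSpace ℝ (Fin d))) [IsProbabilityMeasure μ]
    (hμ : μ = ∑ i : Λ, ENNReal.ofReal (p i) • μ.map (φ i)) :
    (∀ᵐ x ∂μ, pwAssouadDim μ x =
      ⨆ i : Λ, ENNReal.ofReal (Real.log (p i) / Real.log (r i))) ∧
    assouadDimOn μ F = ⨆ i : Λ, ENNReal.ofReal (Real.log (p i) / Real.log (r i)) :=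
  selfSimilar_SSC_pwAssouadDim_ae_general φ r hr hsim F hFc hFne hFinv hSSC p hp hpsum μ hμ
end
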